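/- arXiv:0905.1854 — 6 statements merged into one kernel-verified Lean document; each statement's English description precedes it below -/
import Mathlib

section
/- The bilinear operator B of the GOY shell model satisfies the antisymmetry relation Re Σ_n [B(u,v)]_n w_n* = − Re Σ_n [B(u,w)]_n v_n* for all u, v in H and w in V. -/
open scoped ComplexConjugate

/-- `k_n = k_0 μ^n`. -/
noncomputable def kseq (k0 μ : ℝ) (n : ℕ) : ℝ := k0 * μ ^ n

/-- The GOY shell model bilinear operator (componentwise, with the convention
`u 0 = 0` playing the role of `u_0 = u_{-1} = 0`; truncated subtraction on `ℕ`
sends the out-of-range indices to `0`). -/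
noncomputable def goyB (k0 μ a b : ℝ) (u v : ℕ → ℂ) (n : ℕ) : ℂ :=
  -Complex.I *
    ( ((a * kseq k0 μ (n+1) : ℝ) : ℂ) * conj (u (n+1)) * conj (v (n+2))
    + ((b * kseq k0 μ n : ℝ) : ℂ) * conj (u (n-1)) * conj (v (n+1))
    - ((a * kseq k0 μ (n-1) : ℝ) : ℂ) * conj (u (n-1)) * conj (v (n-2))
    - ((b * kseq k0 μ (n-1) : ℝ) : ℂ) * conj (u (n-2)) * conj (v (n-1)) )

/-- Real pairing `⟨x,y⟩ = Re Σ_{n≥1} x_n y_n^*`. -/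
noncomputable def pairH (x y : ℕ → ℂ) : ℝ := ∑' n : ℕ, (x (n+1) * conj (y (n+1))).re

/-- `|u|² = Σ_{n≥1} |u_n|²`. -/
noncomputable def hSq (u : ℕ → ℂ) : ℝ := ∑' n : ℕ, ‖u (n+1)‖^2

/-- `‖u‖² = Σ_{n≥1} k_n² |u_n|²`. -/
noncomputable def vSq (k0 μ : ℝ) (u : ℕ → ℂ) : ℝ :=
  ∑' n : ℕ, (kseq k0 μ (n+1))^2 * ‖u (n+1)‖^2

/-- `u ∈ H`. -/
def memH (u : ℕ → ℂ) : Prop := Summable (fun n : ℕ => ‖u (n+1)‖^2)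

/-- `u ∈ V`. -/
def memV (k0 μ : ℝ) (u : ℕ → ℂ) : Prop :=
  Summable (fun n : ℕ => (kseq k0 μ (n+1))^2 * ‖u (n+1)‖^2)

noncomputable def goyQ (k0 μ b : ℝ) (u v w : ℕ → ℂ) (m : ℕ) : ℝ :=
  b * kseq k0 μ m * ((u (m-1) * v (m+1) * w m).im + (u (m-1) * v m * w (m+1)).im)

noncomputable def goyR (k0 μ a : ℝ) (u v w : ℕ → ℂ) (m : ℕ) : ℝ :=
  a * kseq k0 μ m * ((u m * v (m-1) * w (m+1)).im + (u m * v (m+1) * w (m-1)).im)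

lemma sq_mul_summable {f g : ℕ → ℝ} (hf : Summable (fun n => f n ^ 2))
    (hg : Summable (fun n => g n ^ 2)) (hf0 : ∀ n, 0 ≤ f n) (hg0 : ∀ n, 0 ≤ g n) :
    Summable (fun n => f n * g n) := by
  refine Summable.of_nonneg_of_le (fun n => mul_nonneg (hf0 n) (hg0 n)) (fun n => ?_)
    ((hf.add hg).div_const 2)
  have := two_mul_le_add_sq (f n) (g n)
  linarith

lemma summable_pred' {f : ℕ → ℝ} (hf : Summable f) : Summable (fun n => f (n - 1)) :=
  (summable_nat_add_iff 1).mp (by simpa using hf)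

lemma im_bound (x y z : ℂ) : |(x * y * z).im| ≤ ‖x‖ * ‖y‖ * ‖z‖ := by
  calc |(x * y * z).im| ≤ ‖x * y * z‖ := Complex.abs_im_le_norm _
    _ = ‖x‖ * ‖y‖ * ‖z‖ := by
        rw [norm_mul, norm_mul]

lemma re_bound (z y : ℂ) : |(z * conj y).re| ≤ ‖z‖ * ‖y‖ := by
  calc |(z * conj y).re| ≤ ‖z * conj y‖ := Complex.abs_re_le_norm _
    _ = ‖z‖ * ‖y‖ := by
        rw [norm_mul, Complex.norm_conj]

lemma goy_pointwise (k0 μ a b : ℝ) (u v w : ℕ → ℂ) (m : ℕ) :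
    (goyB k0 μ a b u v (m+1) * conj (w (m+1))).re
    = -(goyB k0 μ a b u w (m+1) * conj (v (m+1))).re
      + ((goyQ k0 μ b u v w m - goyQ k0 μ b u v w (m+1))
        + (goyR k0 μ a u v w m - goyR k0 μ a u v w (m+2))) := by
  simp only [goyB, goyQ, goyR,
    show m+1+1 = m+2 from rfl, show m+1+2 = m+3 from rfl, show m+2+1 = m+3 from rfl,
    show m+1-1 = m from rfl, show m+1-2 = m-1 from rfl, show m+2-1 = m+1 from rfl]
  simp only [Complex.mul_re, Complex.mul_im, Complex.add_re, Complex.add_im,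
    Complex.sub_re, Complex.sub_im, Complex.neg_re, Complex.neg_im,
    Complex.I_re, Complex.I_im, Complex.ofReal_re, Complex.ofReal_im,
    Complex.conj_re, Complex.conj_im]
  ring

set_option maxHeartbeats 1000000 in
/-- Antisymmetry of the GOY operator: `⟨B(u,v), w⟩ = −(B(u,w), v)`. -/
theorem goy_antisymmetry (k0 μ a b : ℝ) (hk0 : 0 < k0) (hμ : 1 < μ)
    (u v w : ℕ → ℂ) (hu0 : u 0 = 0) (hv0 : v 0 = 0) (hw0 : w 0 = 0)
    (huH : memH u) (hvH : memH v) (hwV : memV k0 μ w) :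
    pairH (goyB k0 μ a b u v) w = - pairH (goyB k0 μ a b u w) v := by
  -- basic facts about kseq
  have hμ0 : (0:ℝ) < μ := lt_trans one_pos hμ
  have hkpos : ∀ n, (0:ℝ) < kseq k0 μ n := fun n => mul_pos hk0 (pow_pos hμ0 n)
  have hkmono : ∀ n, kseq k0 μ n ≤ kseq k0 μ (n+1) := by
    intro n
    have : μ ^ n ≤ μ ^ (n+1) := pow_le_pow_right₀ (le_of_lt hμ) (Nat.le_succ n)
    exact mul_le_mul_of_nonneg_left this (le_of_lt hk0)
  have hkpred : ∀ n : ℕ, kseq k0 μ n ≤ μ * kseq k0 μ (n-1) := by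
    intro n
    cases n with
    | zero => simp only [kseq, Nat.zero_sub]; nlinarith [pow_pos hμ0 0]
    | succ m => exact le_of_eq (by rw [kseq, kseq, Nat.succ_sub_one, pow_succ]; ring)
  -- summability of squares, index 0 included
  have Sv : Summable (fun n => ‖v n‖ ^ 2) := (summable_nat_add_iff 1).mp hvH
  have Su : Summable (fun n => ‖u n‖ ^ 2) := (summable_nat_add_iff 1).mp huH
  have SW : Summable (fun n => (kseq k0 μ n * ‖w n‖) ^ 2) := by
    have h : Summable (fun n : ℕ => kseq k0 μ n ^ 2 * ‖w n‖ ^ 2) :=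
      (summable_nat_add_iff 1).mp hwV
    simpa [mul_pow] using h
  -- uniform bound on u
  set Cu : ℝ := Real.sqrt (∑' n, ‖u n‖ ^ 2) with hCudef
  have hCu0 : 0 ≤ Cu := Real.sqrt_nonneg _
  have hCu : ∀ n, ‖u n‖ ≤ Cu := by
    intro n
    have h1 : ‖u n‖ ^ 2 ≤ ∑' n, ‖u n‖ ^ 2 :=
      Summable.le_tsum Su n (fun j _ => sq_nonneg _)
    have := Real.sqrt_le_sqrt h1
    rwa [Real.sqrt_sq (norm_nonneg _)] at this
  -- shorthand
  set Q : ℕ → ℝ := goyQ k0 μ b u v w with hQdef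
  set r : ℕ → ℝ := goyR k0 μ a u v w with hrdef
  set W : ℕ → ℝ := fun n => kseq k0 μ n * ‖w n‖ with hWdef
  have hW0 : ∀ n, 0 ≤ W n := fun n => mul_nonneg (hkpos n).le (norm_nonneg _)
  have SW' : Summable (fun n => W n ^ 2) := SW
  -- summable products
  have prodsum : ∀ (i : ℕ → ℕ), Summable (fun n => (‖v (i n)‖) ^ 2) → ∀ (j : ℕ → ℕ),
      Summable (fun n => W (j n) ^ 2) →
      Summable (fun n => ‖v (i n)‖ * W (j n)) := by
    intro i hi j hj
    exact sq_mul_summable hi hj (fun n => norm_nonneg _) (fun n => hW0 (j n))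
  have SV1 : Summable (fun n => ‖v (n+1)‖ ^ 2) := hvH
  have SVm : Summable (fun n => ‖v (n-1)‖ ^ 2) := summable_pred' Sv
  have SWm : Summable (fun n => W (n-1) ^ 2) := summable_pred' SW'
  have SWs : ∀ k : ℕ, Summable (fun n => W (n+k) ^ 2) :=
    fun k => (summable_nat_add_iff k).mpr SW'
  -- bound on Q
  have hQb : ∀ m, |Q m| ≤ |b| * Cu *
      (‖v (m+1)‖ * W m + ‖v m‖ * W (m+1)) := by
    intro m
    have h1 := im_bound (u (m-1)) (v (m+1)) (w m)
    have h2 := im_bound (u (m-1)) (v m) (w (m+1))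
    have hu1 := hCu (m-1)
    rw [hQdef, goyQ, abs_mul, abs_mul, abs_of_nonneg (hkpos m).le]
    calc |b| * kseq k0 μ m * |(u (m-1) * v (m+1) * w m).im + (u (m-1) * v m * w (m+1)).im|
        ≤ |b| * kseq k0 μ m *
          (Cu * ‖v (m+1)‖ * ‖w m‖ + Cu * ‖v m‖ * ‖w (m+1)‖) := by
          have hb1 : |(u (m-1) * v (m+1) * w m).im| ≤ Cu * ‖v (m+1)‖ * ‖w m‖ := by
            refine h1.trans ?_
            gcongr
          have hb2 : |(u (m-1) * v m * w (m+1)).im| ≤ Cu * ‖v m‖ * ‖w (m+1)‖ := by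
            refine h2.trans ?_
            gcongr
          have := (abs_add_le _ _).trans (add_le_add hb1 hb2)
          exact mul_le_mul_of_nonneg_left this (mul_nonneg (abs_nonneg b) (hkpos m).le)
      _ = |b| * Cu * (‖v (m+1)‖ * (kseq k0 μ m * ‖w m‖)
            + ‖v m‖ * (kseq k0 μ m * ‖w (m+1)‖)) := by ring
      _ ≤ |b| * Cu * (‖v (m+1)‖ * W m + ‖v m‖ * W (m+1)) := by
          rw [hWdef]
          refine mul_le_mul_of_nonneg_left ?_ (mul_nonneg (abs_nonneg b) hCu0)
          refine add_le_add le_rfl ?_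
          exact mul_le_mul_of_nonneg_left
            (mul_le_mul_of_nonneg_right (hkmono m) (norm_nonneg _)) (norm_nonneg _)
  -- bound on r
  have hrb : ∀ m, |r m| ≤ |a| * Cu *
      (‖v (m-1)‖ * W (m+1) + μ * (‖v (m+1)‖ * W (m-1))) := by
    intro m
    have h1 := im_bound (u m) (v (m-1)) (w (m+1))
    have h2 := im_bound (u m) (v (m+1)) (w (m-1))
    have hu1 := hCu m
    rw [hrdef, goyR, abs_mul, abs_mul, abs_of_nonneg (hkpos m).le]
    calc |a| * kseq k0 μ m * |(u m * v (m-1) * w (m+1)).im + (u m * v (m+1) * w (m-1)).im|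
        ≤ |a| * kseq k0 μ m *
          (Cu * ‖v (m-1)‖ * ‖w (m+1)‖ + Cu * ‖v (m+1)‖ * ‖w (m-1)‖) := by
          have hb1 : |(u m * v (m-1) * w (m+1)).im| ≤ Cu * ‖v (m-1)‖ * ‖w (m+1)‖ := by
            refine h1.trans ?_; gcongr
          have hb2 : |(u m * v (m+1) * w (m-1)).im| ≤ Cu * ‖v (m+1)‖ * ‖w (m-1)‖ := by
            refine h2.trans ?_; gcongr
          have := (abs_add_le _ _).trans (add_le_add hb1 hb2)
          exact mul_le_mul_of_nonneg_left this (mul_nonneg (abs_nonneg a) (hkpos m).le)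
      _ = |a| * Cu * (‖v (m-1)‖ * (kseq k0 μ m * ‖w (m+1)‖)
            + ‖v (m+1)‖ * (kseq k0 μ m * ‖w (m-1)‖)) := by ring
      _ ≤ |a| * Cu * (‖v (m-1)‖ * W (m+1) + μ * (‖v (m+1)‖ * W (m-1))) := by
          rw [hWdef]
          refine mul_le_mul_of_nonneg_left (add_le_add ?_ ?_)
            (mul_nonneg (abs_nonneg a) hCu0)
          · exact mul_le_mul_of_nonneg_left
              (mul_le_mul_of_nonneg_right (hkmono m) (norm_nonneg _)) (norm_nonneg _)
          · have : kseq k0 μ m * ‖w (m-1)‖ ≤ μ * (kseq k0 μ (m-1) * ‖w (m-1)‖) := by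
              rw [← mul_assoc]
              exact mul_le_mul_of_nonneg_right (hkpred m) (norm_nonneg _)
            calc ‖v (m+1)‖ * (kseq k0 μ m * ‖w (m-1)‖)
                ≤ ‖v (m+1)‖ * (μ * (kseq k0 μ (m-1) * ‖w (m-1)‖)) :=
                  mul_le_mul_of_nonneg_left this (norm_nonneg _)
              _ = μ * (‖v (m+1)‖ * (kseq k0 μ (m-1) * ‖w (m-1)‖)) := by ring
  -- summability of Q and r
  have hQs : Summable Q := by
    refine Summable.of_norm_bounded ?_ (fun m => by
      simpa [Real.norm_eq_abs] using hQb m)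
    exact (((prodsum _ SV1 _ SW').add (prodsum _ Sv _ (SWs 1))).mul_left (|b| * Cu))
  have hrs : Summable r := by
    refine Summable.of_norm_bounded ?_ (fun m => by
      simpa [Real.norm_eq_abs] using hrb m)
    exact (((prodsum _ SVm _ (SWs 1)).add ((prodsum _ SV1 _ SWm).mul_left μ)).mul_left (|a| * Cu))
  -- bound on the second pairing summand
  have piece : ∀ (c : ℝ) (x z : ℂ) (k k' : ℝ), 0 ≤ k → k ≤ k' → ‖x‖ ≤ Cu →
      |c| * |k| * ‖x‖ * ‖z‖ ≤ |c| * (Cu * (k' * ‖z‖)) := by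
    intro c x z k k' hk hkk hx
    rw [abs_of_nonneg hk]
    have h1 : ‖x‖ * (k * ‖z‖) ≤ Cu * (k' * ‖z‖) :=
      mul_le_mul hx (mul_le_mul_of_nonneg_right hkk (norm_nonneg _))
        (mul_nonneg hk (norm_nonneg _)) hCu0
    calc |c| * k * ‖x‖ * ‖z‖ = |c| * (‖x‖ * (k * ‖z‖)) := by ring
      _ ≤ |c| * (Cu * (k' * ‖z‖)) := mul_le_mul_of_nonneg_left h1 (abs_nonneg c)
  have hgoyBw : ∀ m : ℕ, ‖goyB k0 μ a b u w (m+1)‖ ≤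
      Cu * (|a| * W (m+3) + |b| * W (m+2) + |a| * (μ * W (m-1)) + |b| * W m) := by
    intro m
    simp only [hWdef]
    rw [goyB]
    simp only [show m+1+1 = m+2 from rfl, show m+1+2 = m+3 from rfl,
      show m+1-1 = m from rfl, show m+1-2 = m-1 from rfl]
    rw [norm_mul, norm_neg, Complex.norm_I, one_mul]
    set A := ((a * kseq k0 μ (m+2) : ℝ) : ℂ) * conj (u (m+2)) * conj (w (m+3)) with hA
    set B := ((b * kseq k0 μ (m+1) : ℝ) : ℂ) * conj (u m) * conj (w (m+2)) with hB
    set C := ((a * kseq k0 μ m : ℝ) : ℂ) * conj (u m) * conj (w (m-1)) with hC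
    set D := ((b * kseq k0 μ m : ℝ) : ℂ) * conj (u (m-1)) * conj (w m) with hD
    have hnA : ‖A‖ = |a| * |kseq k0 μ (m+2)| * ‖u (m+2)‖ * ‖w (m+3)‖ := by
      simp [hA, Complex.norm_real, Real.norm_eq_abs, abs_mul]
    have hnB : ‖B‖ = |b| * |kseq k0 μ (m+1)| * ‖u m‖ * ‖w (m+2)‖ := by
      simp [hB, Complex.norm_real, Real.norm_eq_abs, abs_mul]
    have hnC : ‖C‖ = |a| * |kseq k0 μ m| * ‖u m‖ * ‖w (m-1)‖ := by
      simp [hC, Complex.norm_real, Real.norm_eq_abs, abs_mul]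
    have hnD : ‖D‖ = |b| * |kseq k0 μ m| * ‖u (m-1)‖ * ‖w m‖ := by
      simp [hD, Complex.norm_real, Real.norm_eq_abs, abs_mul]
    have htri : ‖A + B - C - D‖ ≤ ‖A‖ + ‖B‖ + ‖C‖ + ‖D‖ := by
      calc ‖A + B - C - D‖ ≤ ‖A + B - C‖ + ‖D‖ := norm_sub_le _ _
        _ ≤ (‖A + B‖ + ‖C‖) + ‖D‖ := add_le_add (norm_sub_le _ _) le_rfl
        _ ≤ ‖A‖ + ‖B‖ + ‖C‖ + ‖D‖ := by
            have := norm_add_le A B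
            linarith
    refine htri.trans ?_
    rw [hnA, hnB, hnC, hnD]
    have p1 := piece a (u (m+2)) (w (m+3)) (kseq k0 μ (m+2)) (kseq k0 μ (m+3))
      (hkpos _).le (hkmono _) (hCu _)
    have p2 := piece b (u m) (w (m+2)) (kseq k0 μ (m+1)) (kseq k0 μ (m+2))
      (hkpos _).le (hkmono _) (hCu _)
    have p3 := piece a (u m) (w (m-1)) (kseq k0 μ m) (μ * kseq k0 μ (m-1))
      (hkpos _).le (hkpred m) (hCu _)
    have p4 := piece b (u (m-1)) (w m) (kseq k0 μ m) (kseq k0 μ m)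
      (hkpos _).le le_rfl (hCu _)
    calc |a| * |kseq k0 μ (m+2)| * ‖u (m+2)‖ * ‖w (m+3)‖
          + |b| * |kseq k0 μ (m+1)| * ‖u m‖ * ‖w (m+2)‖
          + |a| * |kseq k0 μ m| * ‖u m‖ * ‖w (m-1)‖
          + |b| * |kseq k0 μ m| * ‖u (m-1)‖ * ‖w m‖
        ≤ |a| * (Cu * (kseq k0 μ (m+3) * ‖w (m+3)‖))
          + |b| * (Cu * (kseq k0 μ (m+2) * ‖w (m+2)‖))
          + |a| * (Cu * ((μ * kseq k0 μ (m-1)) * ‖w (m-1)‖))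
          + |b| * (Cu * (kseq k0 μ m * ‖w m‖)) := by
          exact add_le_add (add_le_add (add_le_add p1 p2) p3) p4
      _ = Cu * (|a| * (kseq k0 μ (m+3) * ‖w (m+3)‖)
          + |b| * (kseq k0 μ (m+2) * ‖w (m+2)‖)
          + |a| * (μ * (kseq k0 μ (m-1) * ‖w (m-1)‖))
          + |b| * (kseq k0 μ m * ‖w m‖)) := by ring
  have hf2b : ∀ m : ℕ, |(goyB k0 μ a b u w (m+1) * conj (v (m+1))).re| ≤
      Cu * (|a| * (‖v (m+1)‖ * W (m+3)) + |b| * (‖v (m+1)‖ * W (m+2))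
        + |a| * μ * (‖v (m+1)‖ * W (m-1)) + |b| * (‖v (m+1)‖ * W m)) := by
    intro m
    refine (re_bound _ _).trans ?_
    calc ‖goyB k0 μ a b u w (m+1)‖ * ‖v (m+1)‖
        ≤ (Cu * (|a| * W (m+3) + |b| * W (m+2) + |a| * (μ * W (m-1)) + |b| * W m))
            * ‖v (m+1)‖ :=
          mul_le_mul_of_nonneg_right (hgoyBw m) (norm_nonneg _)
      _ = Cu * (|a| * (‖v (m+1)‖ * W (m+3)) + |b| * (‖v (m+1)‖ * W (m+2))
          + |a| * μ * (‖v (m+1)‖ * W (m-1)) + |b| * (‖v (m+1)‖ * W m)) := by ring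
  have hf2s : Summable (fun m => (goyB k0 μ a b u w (m+1) * conj (v (m+1))).re) := by
    refine Summable.of_norm_bounded ?_ (fun m => by
      simpa [Real.norm_eq_abs] using hf2b m)
    refine Summable.mul_left Cu ?_
    exact ((((prodsum _ SV1 _ (SWs 3)).mul_left (|a|)).add
      ((prodsum _ SV1 _ (SWs 2)).mul_left (|b|))).add
      ((prodsum _ SV1 _ SWm).mul_left (|a| * μ))).add
      ((prodsum _ SV1 _ SW').mul_left (|b|))
  -- shifted summability
  have hQ1 : Summable (fun m => Q (m+1)) := (summable_nat_add_iff 1).mpr hQs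
  have hr1 : Summable (fun m => r (m+1)) := (summable_nat_add_iff 1).mpr hrs
  have hr2 : Summable (fun m => r (m+2)) := (summable_nat_add_iff 2).mpr hrs
  -- telescoping sums
  have htel1 : ∑' m, (Q m - Q (m+1)) = Q 0 := by
    rw [Summable.tsum_sub hQs hQ1, Summable.tsum_eq_zero_add hQs]
    ring
  have htel2 : ∑' m, (r m - r (m+2)) = r 0 + r 1 := by
    rw [Summable.tsum_sub hrs hr2, Summable.tsum_eq_zero_add hrs]
    have e2 : ∑' n, r (n+1) = r 1 + ∑' n, r (n+2) := by
      have := Summable.tsum_eq_zero_add hr1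
      simpa [add_assoc] using this
    rw [e2]
    ring
  have hQ0 : Q 0 = 0 := by simp [hQdef, goyQ, hu0]
  have hr0 : r 0 = 0 := by simp [hrdef, goyR, hu0]
  have hr1' : r 1 = 0 := by simp [hrdef, goyR, hv0, hw0]
  -- assemble
  have hfun : (fun m => (goyB k0 μ a b u v (m+1) * conj (w (m+1))).re)
      = fun m => -(goyB k0 μ a b u w (m+1) * conj (v (m+1))).re
        + ((Q m - Q (m+1)) + (r m - r (m+2))) :=
    funext fun m => goy_pointwise k0 μ a b u v w m
  rw [pairH, pairH, hfun]
  rw [Summable.tsum_add hf2s.neg ((hQs.sub hQ1).add (hrs.sub hr2)),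
    Summable.tsum_add (hQs.sub hQ1) (hrs.sub hr2), htel1, htel2, tsum_neg, hQ0, hr0, hr1']
  ring
end

section
/- The bilinear operator B of the Sabra shell model satisfies the antisymmetry relation Re Σ_n [B(u,v)]_n w_n* = − Re Σ_n [B(u,w)]_n v_n* for all u, v in H and w in V. -/
open scoped ComplexConjugate

/-- The Sabra shell model bilinear operator (with the convention `u 0 = 0`
standing for `u_0 = u_{-1} = 0`). -/
noncomputable def sabraB (k0 μ a b : ℝ) (u v : ℕ → ℂ) (n : ℕ) : ℂ :=
  -Complex.I *
    ( ((a * kseq k0 μ (n+1) : ℝ) : ℂ) * conj (u (n+1)) * v (n+2)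
    + ((b * kseq k0 μ n : ℝ) : ℂ) * conj (u (n-1)) * v (n+1)
    + ((a * kseq k0 μ (n-1) : ℝ) : ℂ) * u (n-1) * v (n-2)
    + ((b * kseq k0 μ (n-1) : ℝ) : ℂ) * u (n-2) * v (n-1) )

/-! ### Auxiliary definitions: the four summands of `(B(u,v)ₙ, conj wₙ).re` -/

noncomputable def T1 (k0 μ a : ℝ) (u v w : ℕ → ℂ) (m : ℕ) : ℝ :=
  a * kseq k0 μ (m+1) * ((conj (u (m+1)) * v (m+2)) * conj (w m)).im
noncomputable def T2 (k0 μ b : ℝ) (u v w : ℕ → ℂ) (m : ℕ) : ℝ :=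
  b * kseq k0 μ m * ((conj (u (m-1)) * v (m+1)) * conj (w m)).im
noncomputable def T3 (k0 μ a : ℝ) (u v w : ℕ → ℂ) (m : ℕ) : ℝ :=
  a * kseq k0 μ (m-1) * ((u (m-1) * v (m-2)) * conj (w m)).im
noncomputable def T4 (k0 μ b : ℝ) (u v w : ℕ → ℂ) (m : ℕ) : ℝ :=
  b * kseq k0 μ (m-1) * ((u (m-2) * v (m-1)) * conj (w m)).im

lemma sabra_expand (k0 μ a b : ℝ) (u v w : ℕ → ℂ) (m : ℕ) :
    (sabraB k0 μ a b u v m * conj (w m)).re =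
      T1 k0 μ a u v w m + T2 k0 μ b u v w m + T3 k0 μ a u v w m + T4 k0 μ b u v w m := by
  simp only [sabraB, T1, T2, T3, T4, Complex.mul_re, Complex.mul_im, Complex.add_re,
    Complex.add_im, Complex.neg_re, Complex.neg_im, Complex.I_re, Complex.I_im,
    Complex.conj_re, Complex.conj_im, Complex.ofReal_re, Complex.ofReal_im]
  ring

lemma conj_im_swap (z1 z2 z3 : ℂ) :
    ((z1 * z2) * conj z3).im = - ((conj z1 * z3) * conj z2).im := by
  simp only [Complex.mul_im, Complex.mul_re, Complex.conj_re, Complex.conj_im]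
  ring

/-- `T3` with the roles of the last two arguments swapped is a shift of `-T1`. -/
lemma rel13 (k0 μ a : ℝ) (x y z : ℕ → ℂ) (m : ℕ) :
    T3 k0 μ a x z y (m+2) = - T1 k0 μ a x y z m := by
  show a * kseq k0 μ (m+1) * ((x (m+1) * z m) * conj (y (m+2))).im = _
  rw [conj_im_swap]
  simp only [T1, Complex.mul_im, Complex.mul_re, Complex.conj_re, Complex.conj_im]
  ring

/-- `T4` with the roles of the last two arguments swapped is a shift of `-T2`. -/
lemma rel24 (k0 μ b : ℝ) (x y z : ℕ → ℂ) (m : ℕ) :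
    T4 k0 μ b x z y (m+1) = - T2 k0 μ b x y z m := by
  show b * kseq k0 μ m * ((x (m-1) * z m) * conj (y (m+1))).im = _
  rw [conj_im_swap]
  simp only [T2, Complex.mul_im, Complex.mul_re, Complex.conj_re, Complex.conj_im]
  ring

lemma im_bd (z1 z2 z3 : ℂ) : |((z1 * z2) * conj z3).im| ≤ ‖z1‖ * ‖z2‖ * ‖z3‖ := by
  calc |((z1 * z2) * conj z3).im| ≤ ‖(z1 * z2) * conj z3‖ := by
        simpa using Complex.abs_im_le_norm ((z1*z2) * conj z3)
    _ = ‖z1‖ * ‖z2‖ * ‖z3‖ := by simp [norm_mul]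

lemma summable_mul_sq {x y : ℕ → ℝ} (hx : Summable fun n => x n ^ 2)
    (hy : Summable fun n => y n ^ 2) : Summable fun n => |x n| * |y n| := by
  refine Summable.of_nonneg_of_le (fun n => by positivity) (fun n => ?_)
    ((hx.add hy).div_const 2)
  have h := sq_nonneg (|x n| - |y n|)
  have h1 : |x n| ^ 2 = x n ^ 2 := sq_abs _
  have h2 : |y n| ^ 2 = y n ^ 2 := sq_abs _
  nlinarith

lemma summable_of_bd {t x y : ℕ → ℝ} (C : ℝ) (hx : Summable fun n => x n ^ 2)
    (hy : Summable fun n => y n ^ 2) (hb : ∀ n, |t n| ≤ C * (|x n| * |y n|)) :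
    Summable t := by
  refine summable_abs_iff.mp ?_
  exact Summable.of_nonneg_of_le (fun n => abs_nonneg _) hb ((summable_mul_sq hx hy).mul_left C)

lemma tsum_shift1 {f : ℕ → ℝ} (hf : Summable fun n => f (n+1)) (h1 : f 1 = 0) :
    ∑' n, f (n+1) = ∑' n, f (n+2) := by
  rw [Summable.tsum_eq_zero_add hf]
  simp [h1]

lemma tsum_shift2 {f : ℕ → ℝ} (hf : Summable fun n => f (n+1)) (h1 : f 1 = 0) (h2 : f 2 = 0) :
    ∑' n, f (n+1) = ∑' n, f (n+3) := by
  rw [tsum_shift1 hf h1]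
  exact tsum_shift1 (f := fun n => f (n+1)) ((summable_nat_add_iff 1).2 hf) h2

set_option maxHeartbeats 1000000 in
/-- Antisymmetry of the Sabra operator: `⟨B(u,v), w⟩ = −(B(u,w), v)`. -/
theorem sabra_antisymmetry (k0 μ a b : ℝ) (hk0 : 0 < k0) (hμ : 1 < μ)
    (u v w : ℕ → ℂ) (hu0 : u 0 = 0) (hv0 : v 0 = 0) (hw0 : w 0 = 0)
    (huH : memH u) (hvH : memH v) (hwV : memV k0 μ w) :
    pairH (sabraB k0 μ a b u v) w = - pairH (sabraB k0 μ a b u w) v := by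
  have hμ0 : (0:ℝ) < μ := lt_trans one_pos hμ
  have hKpos : ∀ n, 0 < kseq k0 μ n := fun n => by unfold kseq; positivity
  have hKsucc : ∀ n, kseq k0 μ (n+1) = μ * kseq k0 μ n := fun n => by
    unfold kseq; rw [pow_succ]; ring
  -- sup bounds on v and w
  have hvb : ∀ m, ‖v m‖ ≤ Real.sqrt (∑' n, ‖v (n+1)‖^2) := by
    intro m
    match m with
    | 0 => simp [hv0, Real.sqrt_nonneg]
    | m+1 =>
      have h1 : ‖v (m+1)‖^2 ≤ ∑' n, ‖v (n+1)‖^2 :=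
        Summable.le_tsum hvH m (fun j _ => by positivity)
      calc ‖v (m+1)‖ = Real.sqrt (‖v (m+1)‖^2) := (Real.sqrt_sq (norm_nonneg _)).symm
        _ ≤ _ := Real.sqrt_le_sqrt h1
  set Mv : ℝ := Real.sqrt (∑' n, ‖v (n+1)‖^2) with hMvdef
  have hMv0 : 0 ≤ Mv := Real.sqrt_nonneg _
  -- summable square sequences
  have hy2 : Summable fun n => (kseq k0 μ (n+1) * ‖w (n+1)‖) ^ 2 := by
    simpa [mul_pow, memV] using hwV
  have hu0' : Summable fun n => ‖u n‖ ^ 2 := (summable_nat_add_iff 1).1 huH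
  have hu2 : Summable fun n => ‖u (n+2)‖ ^ 2 := (summable_nat_add_iff 1).2 huH
  have hum1 : Summable fun n => ‖u (n-1)‖ ^ 2 := (summable_nat_add_iff 1).1 hu0'
  -- summability of the four unprimed term series
  have bound : ∀ (c kk kk' X V W t : ℝ), 0 ≤ X → 0 ≤ V → 0 ≤ W → 0 ≤ kk' →
      kk ≤ kk' → V ≤ Mv → |t| ≤ |c| * kk * (X * V * W) →
      |t| ≤ (|c| * Mv) * (|X| * |kk' * W|) := by
    intro c kk kk' X V W t hX hV hW hk' hkk hVM ht
    have e0 : (0:ℝ) ≤ |c| * (X * W) := mul_nonneg (abs_nonneg _) (mul_nonneg hX hW)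
    calc |t| ≤ |c| * kk * (X * V * W) := ht
      _ = (|c| * (X * W)) * (kk * V) := by ring
      _ ≤ (|c| * (X * W)) * (kk' * Mv) :=
          mul_le_mul_of_nonneg_left (mul_le_mul hkk hVM hV hk') e0
      _ = (|c| * Mv) * (X * (kk' * W)) := by ring
      _ = (|c| * Mv) * (|X| * |kk' * W|) := by
          rw [abs_of_nonneg hX, abs_of_nonneg (mul_nonneg hk' hW)]
  have habs : ∀ (c kk i : ℝ), 0 < kk → |c * kk * i| = |c| * kk * |i| := by
    intro c kk i hkk
    rw [abs_mul, abs_mul, abs_of_pos hkk]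
  have hS1 : Summable fun n => T1 k0 μ a u v w (n+1) := by
    refine summable_of_bd (|a| * μ * Mv) hu2 hy2 (fun n => ?_)
    have hIm : |((conj (u (n+2)) * v (n+3)) * conj (w (n+1))).im| ≤
        ‖u (n+2)‖ * ‖v (n+3)‖ * ‖w (n+1)‖ := by
      simpa using im_bd (conj (u (n+2))) (v (n+3)) (w (n+1))
    have h1 : |T1 k0 μ a u v w (n+1)| ≤ |a| * kseq k0 μ (n+2) * (‖u (n+2)‖ * ‖v (n+3)‖ * ‖w (n+1)‖) := by
      rw [T1, habs _ _ _ (hKpos (n+2))]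
      exact mul_le_mul_of_nonneg_left hIm (mul_nonneg (abs_nonneg _) (hKpos (n+2)).le)
    have h2 := bound a (kseq k0 μ (n+2)) (μ * kseq k0 μ (n+1)) ‖u (n+2)‖ ‖v (n+3)‖ ‖w (n+1)‖
      _ (norm_nonneg _) (norm_nonneg _) (norm_nonneg _)
      (mul_nonneg hμ0.le (hKpos (n+1)).le) (le_of_eq (hKsucc (n+1))) (hvb (n+3)) h1
    calc |T1 k0 μ a u v w (n+1)| ≤ (|a| * Mv) * (|‖u (n+2)‖| * |μ * kseq k0 μ (n+1) * ‖w (n+1)‖|) := h2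
      _ = (|a| * μ * Mv) * (|‖u (n+2)‖| * |kseq k0 μ (n+1) * ‖w (n+1)‖|) := by
          rw [abs_of_nonneg (mul_nonneg (mul_nonneg hμ0.le (hKpos (n+1)).le) (norm_nonneg _)),
            abs_of_nonneg (mul_nonneg (hKpos (n+1)).le (norm_nonneg _))]
          ring
  have hS2 : Summable fun n => T2 k0 μ b u v w (n+1) := by
    refine summable_of_bd (|b| * Mv) hu0' hy2 (fun n => ?_)
    have hIm : |((conj (u n) * v (n+2)) * conj (w (n+1))).im| ≤
        ‖u n‖ * ‖v (n+2)‖ * ‖w (n+1)‖ := by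
      simpa using im_bd (conj (u n)) (v (n+2)) (w (n+1))
    have h1 : |T2 k0 μ b u v w (n+1)| ≤ |b| * kseq k0 μ (n+1) * (‖u n‖ * ‖v (n+2)‖ * ‖w (n+1)‖) := by
      have e : T2 k0 μ b u v w (n+1) =
          b * kseq k0 μ (n+1) * ((conj (u n) * v (n+2)) * conj (w (n+1))).im := rfl
      rw [e, habs _ _ _ (hKpos (n+1))]
      exact mul_le_mul_of_nonneg_left hIm (mul_nonneg (abs_nonneg _) (hKpos (n+1)).le)
    exact bound b (kseq k0 μ (n+1)) (kseq k0 μ (n+1)) ‖u n‖ ‖v (n+2)‖ ‖w (n+1)‖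
      _ (norm_nonneg _) (norm_nonneg _) (norm_nonneg _) (le_of_lt (hKpos (n+1)))
      le_rfl (hvb (n+2)) h1
  have hKle : ∀ n, kseq k0 μ n ≤ kseq k0 μ (n+1) := by
    intro n
    rw [hKsucc n]
    nlinarith [hKpos n]
  have hS3 : Summable fun n => T3 k0 μ a u v w (n+1) := by
    refine summable_of_bd (|a| * Mv) hu0' hy2 (fun n => ?_)
    have hIm : |((u n * v (n-1)) * conj (w (n+1))).im| ≤
        ‖u n‖ * ‖v (n-1)‖ * ‖w (n+1)‖ := im_bd _ _ _
    have h1 : |T3 k0 μ a u v w (n+1)| ≤ |a| * kseq k0 μ n * (‖u n‖ * ‖v (n-1)‖ * ‖w (n+1)‖) := by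
      have e : T3 k0 μ a u v w (n+1) =
          a * kseq k0 μ n * ((u n * v (n-1)) * conj (w (n+1))).im := rfl
      rw [e, habs _ _ _ (hKpos n)]
      exact mul_le_mul_of_nonneg_left hIm (mul_nonneg (abs_nonneg _) (hKpos n).le)
    exact bound a (kseq k0 μ n) (kseq k0 μ (n+1)) ‖u n‖ ‖v (n-1)‖ ‖w (n+1)‖
      _ (norm_nonneg _) (norm_nonneg _) (norm_nonneg _) (le_of_lt (hKpos (n+1)))
      (hKle n) (hvb (n-1)) h1
  have hS4 : Summable fun n => T4 k0 μ b u v w (n+1) := by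
    refine summable_of_bd (|b| * Mv) hum1 hy2 (fun n => ?_)
    have hIm : |((u (n-1) * v n) * conj (w (n+1))).im| ≤
        ‖u (n-1)‖ * ‖v n‖ * ‖w (n+1)‖ := im_bd _ _ _
    have h1 : |T4 k0 μ b u v w (n+1)| ≤ |b| * kseq k0 μ n * (‖u (n-1)‖ * ‖v n‖ * ‖w (n+1)‖) := by
      have e : T4 k0 μ b u v w (n+1) =
          b * kseq k0 μ n * ((u (n-1) * v n) * conj (w (n+1))).im := rfl
      rw [e, habs _ _ _ (hKpos n)]
      exact mul_le_mul_of_nonneg_left hIm (mul_nonneg (abs_nonneg _) (hKpos n).le)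
    exact bound b (kseq k0 μ n) (kseq k0 μ (n+1)) ‖u (n-1)‖ ‖v n‖ ‖w (n+1)‖
      _ (norm_nonneg _) (norm_nonneg _) (norm_nonneg _) (le_of_lt (hKpos (n+1)))
      (hKle n) (hvb n) h1
  -- summability of the primed term series via the shift relations
  have hS3' : Summable fun n => T3 k0 μ a u w v (n+1) := by
    have h : Summable fun n => T3 k0 μ a u w v (n+3) := by
      have e : (fun n => T3 k0 μ a u w v (n+3)) = fun n => - T1 k0 μ a u v w (n+1) :=
        funext fun n => rel13 k0 μ a u v w (n+1)
      rw [e]; exact hS1.neg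
    exact (summable_nat_add_iff 2).1 h
  have hS4' : Summable fun n => T4 k0 μ b u w v (n+1) := by
    have h : Summable fun n => T4 k0 μ b u w v (n+2) := by
      have e : (fun n => T4 k0 μ b u w v (n+2)) = fun n => - T2 k0 μ b u v w (n+1) :=
        funext fun n => rel24 k0 μ b u v w (n+1)
      rw [e]; exact hS2.neg
    exact (summable_nat_add_iff 1).1 h
  have hS1' : Summable fun n => T1 k0 μ a u w v (n+1) := by
    have e : (fun n => T1 k0 μ a u w v (n+1)) = fun n => - T3 k0 μ a u v w (n+3) := by
      funext n
      rw [rel13 k0 μ a u w v (n+1), neg_neg]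
    rw [e]
    exact ((summable_nat_add_iff 2).2 hS3).neg
  have hS2' : Summable fun n => T2 k0 μ b u w v (n+1) := by
    have e : (fun n => T2 k0 μ b u w v (n+1)) = fun n => - T4 k0 μ b u v w (n+2) := by
      funext n
      rw [rel24 k0 μ b u w v (n+1), neg_neg]
    rw [e]
    exact ((summable_nat_add_iff 1).2 hS4).neg
  -- the tsum identities
  have E1 : ∑' n, T3 k0 μ a u w v (n+1) = - ∑' n, T1 k0 μ a u v w (n+1) := by
    rw [tsum_shift2 hS3' (by simp [T3, hu0]) (by simp [T3, hw0])]
    rw [show (fun n => T3 k0 μ a u w v (n+3)) = fun n => - T1 k0 μ a u v w (n+1) from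
      funext fun n => rel13 k0 μ a u v w (n+1)]
    exact tsum_neg
  have E2 : ∑' n, T4 k0 μ b u w v (n+1) = - ∑' n, T2 k0 μ b u v w (n+1) := by
    rw [tsum_shift1 hS4' (by simp [T4, hu0])]
    rw [show (fun n => T4 k0 μ b u w v (n+2)) = fun n => - T2 k0 μ b u v w (n+1) from
      funext fun n => rel24 k0 μ b u v w (n+1)]
    exact tsum_neg
  have E3 : ∑' n, T3 k0 μ a u v w (n+1) = - ∑' n, T1 k0 μ a u w v (n+1) := by
    rw [tsum_shift2 hS3 (by simp [T3, hu0]) (by simp [T3, hv0])]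
    rw [show (fun n => T3 k0 μ a u v w (n+3)) = fun n => - T1 k0 μ a u w v (n+1) from
      funext fun n => rel13 k0 μ a u w v (n+1)]
    exact tsum_neg
  have E4 : ∑' n, T4 k0 μ b u v w (n+1) = - ∑' n, T2 k0 μ b u w v (n+1) := by
    rw [tsum_shift1 hS4 (by simp [T4, hu0])]
    rw [show (fun n => T4 k0 μ b u v w (n+2)) = fun n => - T2 k0 μ b u w v (n+1) from
      funext fun n => rel24 k0 μ b u w v (n+1)]
    exact tsum_neg
  -- expand both pairings
  have L : pairH (sabraB k0 μ a b u v) w =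
      (∑' n, T1 k0 μ a u v w (n+1)) + (∑' n, T2 k0 μ b u v w (n+1)) +
      (∑' n, T3 k0 μ a u v w (n+1)) + (∑' n, T4 k0 μ b u v w (n+1)) := by
    rw [pairH]
    rw [tsum_congr (fun n => sabra_expand k0 μ a b u v w (n+1))]
    rw [Summable.tsum_add ((hS1.add hS2).add hS3) hS4, Summable.tsum_add (hS1.add hS2) hS3, Summable.tsum_add hS1 hS2]
  have R : pairH (sabraB k0 μ a b u w) v =
      (∑' n, T1 k0 μ a u w v (n+1)) + (∑' n, T2 k0 μ b u w v (n+1)) +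
      (∑' n, T3 k0 μ a u w v (n+1)) + (∑' n, T4 k0 μ b u w v (n+1)) := by
    rw [pairH]
    rw [tsum_congr (fun n => sabra_expand k0 μ a b u w v (n+1))]
    rw [Summable.tsum_add ((hS1'.add hS2').add hS3') hS4', Summable.tsum_add (hS1'.add hS2') hS3',
      Summable.tsum_add hS1' hS2']
  rw [L, R]
  linarith [E1, E2, E3, E4]
end

section
/- For the GOY shell model bilinear operator B, the identity ⟨B(u,u), Au⟩ = 0 holds for all u in V if and only if the coefficients satisfy a(1+μ²) + bμ² = 0, where (Au)_n = k_n² u_n. -/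
open scoped ComplexConjugate

/-- The diagonal operator `(Au)_n = k_n² u_n`. -/
noncomputable def opA (k0 μ : ℝ) (u : ℕ → ℂ) (n : ℕ) : ℂ :=
  (((kseq k0 μ n)^2 : ℝ) : ℂ) * u n

/- ### Auxiliary definitions and lemmas -/

/-- Imaginary part of the conjugated triple product `u_j u_{j+1} u_{j+2}`. -/
noncomputable def Tt (u : ℕ → ℂ) (j : ℕ) : ℝ :=
  (conj (u j) * conj (u (j+1)) * conj (u (j+2))).im

/-- The grouped summand `k_{j+1} k_j² Im(u_j* u_{j+1}* u_{j+2}*)`. -/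
noncomputable def Dd (k0 μ : ℝ) (u : ℕ → ℂ) (j : ℕ) : ℝ :=
  kseq k0 μ (j+1) * (kseq k0 μ j)^2 * Tt u j

lemma kseq_pos {k0 μ : ℝ} (hk0 : 0 < k0) (hμ : 1 < μ) (n : ℕ) : 0 < kseq k0 μ n :=
  mul_pos hk0 (pow_pos (lt_trans one_pos hμ) n)

lemma kseq_mono {k0 μ : ℝ} (hk0 : 0 < k0) (hμ : 1 < μ) {m n : ℕ} (h : m ≤ n) :
    kseq k0 μ m ≤ kseq k0 μ n :=
  mul_le_mul_of_nonneg_left (pow_le_pow_right₀ (le_of_lt hμ) h) (le_of_lt hk0)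

lemma pointwise (k0 μ a b : ℝ) (u : ℕ → ℂ) (hu0 : u 0 = 0) (n : ℕ) :
    (goyB k0 μ a b u u (n+1) * conj (opA k0 μ u (n+1))).re
      = a * Dd k0 μ u (n+1) + b * μ^2 * Dd k0 μ u n
        - (a+b) * μ^4 * Dd k0 μ u (n-1) := by
  match n with
  | 0 =>
    simp only [goyB, opA, Dd, Tt, hu0, zero_add, Nat.sub_self, Nat.zero_sub,
      map_zero, map_mul, Complex.mul_re, Complex.mul_im, Complex.neg_re, Complex.neg_im,
      Complex.add_re, Complex.add_im, Complex.sub_re, Complex.sub_im,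
      Complex.ofReal_re, Complex.ofReal_im, Complex.I_re, Complex.I_im,
      Complex.conj_re, Complex.conj_im, Complex.zero_re, Complex.zero_im,
      mul_zero, zero_mul, neg_zero, zero_sub, sub_zero, neg_neg, zero_add, add_zero]
    simp [kseq]
    ring
  | 1 =>
    simp only [goyB, opA, Dd, Tt, hu0, show (1:ℕ)+1-2 = 0 from rfl,
      map_zero, map_mul, Complex.mul_re, Complex.mul_im, Complex.neg_re, Complex.neg_im,
      Complex.add_re, Complex.add_im, Complex.sub_re, Complex.sub_im,
      Complex.ofReal_re, Complex.ofReal_im, Complex.I_re, Complex.I_im,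
      Complex.conj_re, Complex.conj_im, Complex.zero_re, Complex.zero_im,
      mul_zero, zero_mul, neg_zero, zero_sub, sub_zero, neg_neg, zero_add, add_zero]
    simp [kseq]
    ring
  | (m+2) =>
    simp only [goyB, opA, Dd, Tt, Nat.add_sub_cancel,
      show m+2+1-2 = m+1 from rfl, show m+2+1-1 = m+2 from rfl, show m+2-1 = m+1 from rfl,
      Complex.mul_re, Complex.mul_im, Complex.neg_re, Complex.neg_im,
      Complex.add_re, Complex.add_im, Complex.sub_re, Complex.sub_im,
      Complex.ofReal_re, Complex.ofReal_im, Complex.I_re, Complex.I_im,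
      Complex.conj_re, Complex.conj_im,
      mul_zero, zero_mul, neg_zero, zero_sub, sub_zero, neg_neg, zero_add, add_zero]
    simp only [kseq, pow_succ]
    ring

lemma summable_Dd {k0 μ : ℝ} (hk0 : 0 < k0) (hμ : 1 < μ) {u : ℕ → ℂ}
    (hu0 : u 0 = 0) (hu : memV k0 μ u) : Summable (Dd k0 μ u) := by
  set w : ℕ → ℝ := fun j => kseq k0 μ (j+1) * ‖u (j+1)‖ with hw
  have hwnn : ∀ j, 0 ≤ w j := fun j => mul_nonneg (le_of_lt (kseq_pos hk0 hμ _)) (norm_nonneg _)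
  have hwsq : Summable (fun j => (w j)^2) := by
    refine hu.congr fun j => ?_
    simp [hw, mul_pow]
  set M : ℝ := Real.sqrt (∑' j, (w j)^2) with hM
  have hwle : ∀ j, w j ≤ M := by
    intro j
    have h1 : (w j)^2 ≤ ∑' j, (w j)^2 := Summable.le_tsum hwsq j (fun i _ => sq_nonneg _)
    calc w j = Real.sqrt ((w j)^2) := (Real.sqrt_sq (hwnn j)).symm
      _ ≤ M := Real.sqrt_le_sqrt h1
  have hMnn : 0 ≤ M := Real.sqrt_nonneg _
  have key : Summable (fun j => Dd k0 μ u (j+1)) := by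
    have hb : Summable (fun j => M * ((w j)^2 + (w (j+1))^2) / 2) := by
      apply Summable.div_const
      exact (hwsq.add ((summable_nat_add_iff 1).mpr hwsq)).mul_left M
    refine (summable_abs_iff.mp (Summable.of_nonneg_of_le (fun j => abs_nonneg _) (fun j => ?_) hb))
    have hT : |Tt u (j+1)| ≤ ‖u (j+1)‖ * ‖u (j+2)‖ * ‖u (j+3)‖ := by
      calc |Tt u (j+1)| ≤ ‖conj (u (j+1)) * conj (u (j+2)) * conj (u (j+3))‖ :=
            Complex.abs_im_le_norm _
        _ = ‖u (j+1)‖ * ‖u (j+2)‖ * ‖u (j+3)‖ := by simp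
    have hknn : (0:ℝ) ≤ kseq k0 μ (j+2) * (kseq k0 μ (j+1))^2 :=
      mul_nonneg (le_of_lt (kseq_pos hk0 hμ _)) (sq_nonneg _)
    have h1 : |Dd k0 μ u (j+1)| ≤ kseq k0 μ (j+2) * (kseq k0 μ (j+1))^2 *
        (‖u (j+1)‖ * ‖u (j+2)‖ * ‖u (j+3)‖) := by
      rw [Dd, abs_mul, abs_of_nonneg hknn]
      exact mul_le_mul_of_nonneg_left hT hknn
    have h2 : kseq k0 μ (j+2) * (kseq k0 μ (j+1))^2 * (‖u (j+1)‖ * ‖u (j+2)‖ * ‖u (j+3)‖)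
        ≤ w j * w (j+1) * w (j+2) := by
      have hh : kseq k0 μ (j+2) * (kseq k0 μ (j+1))^2 ≤
          kseq k0 μ (j+1) * kseq k0 μ (j+2) * kseq k0 μ (j+3) := by
        have h3 : kseq k0 μ (j+1) ≤ kseq k0 μ (j+3) := kseq_mono hk0 hμ (by omega)
        nlinarith [kseq_pos hk0 hμ (j+1), kseq_pos hk0 hμ (j+2)]
      calc kseq k0 μ (j+2) * (kseq k0 μ (j+1))^2 * (‖u (j+1)‖ * ‖u (j+2)‖ * ‖u (j+3)‖)
          ≤ kseq k0 μ (j+1) * kseq k0 μ (j+2) * kseq k0 μ (j+3) *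
            (‖u (j+1)‖ * ‖u (j+2)‖ * ‖u (j+3)‖) := by
            apply mul_le_mul_of_nonneg_right hh
            positivity
        _ = w j * w (j+1) * w (j+2) := by simp [hw]; ring
    have h4 : w j * w (j+1) * w (j+2) ≤ M * ((w j)^2 + (w (j+1))^2) / 2 := by
      have h5 : w j * w (j+1) ≤ ((w j)^2 + (w (j+1))^2)/2 := by nlinarith [sq_nonneg (w j - w (j+1))]
      have h6 : w (j+2) ≤ M := hwle _
      nlinarith [hwnn j, hwnn (j+1), hwnn (j+2), mul_nonneg (hwnn j) (hwnn (j+1))]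
    linarith
  exact (summable_nat_add_iff 1).mp key

lemma pair_eq (k0 μ a b : ℝ) (hk0 : 0 < k0) (hμ : 1 < μ) (u : ℕ → ℂ)
    (hu0 : u 0 = 0) (hu : memV k0 μ u) :
    pairH (goyB k0 μ a b u u) (opA k0 μ u)
      = (a + b*μ^2 - (a+b)*μ^4) * ∑' j, Dd k0 μ u j := by
  have hD : Summable (Dd k0 μ u) := summable_Dd hk0 hμ hu0 hu
  have hD0 : Dd k0 μ u 0 = 0 := by simp [Dd, Tt, hu0]
  have h1 : Summable (fun n => Dd k0 μ u (n+1)) := (summable_nat_add_iff 1).mpr hD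
  have h2 : Summable (fun n : ℕ => Dd k0 μ u (n-1)) := by
    refine (summable_nat_add_iff (f := fun n : ℕ => Dd k0 μ u (n-1)) 1).mp ?_
    simpa using hD
  have e1 : ∑' n, Dd k0 μ u (n+1) = ∑' j, Dd k0 μ u j := by
    rw [Summable.tsum_eq_zero_add hD, hD0, zero_add]
  have e2 : ∑' n : ℕ, Dd k0 μ u (n-1) = ∑' j, Dd k0 μ u j := by
    rw [Summable.tsum_eq_zero_add h2]
    simp [hD0]
  rw [pairH]
  have hpt : ∀ n, (goyB k0 μ a b u u (n+1) * conj (opA k0 μ u (n+1))).re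
      = a * Dd k0 μ u (n+1) + b * μ^2 * Dd k0 μ u n - (a+b) * μ^4 * Dd k0 μ u (n-1) :=
    pointwise k0 μ a b u hu0
  calc (∑' n : ℕ, (goyB k0 μ a b u u (n+1) * conj (opA k0 μ u (n+1))).re)
      = ∑' n : ℕ, (a * Dd k0 μ u (n+1) + b * μ^2 * Dd k0 μ u n
          - (a+b) * μ^4 * Dd k0 μ u (n-1)) := tsum_congr hpt
    _ = (∑' n : ℕ, (a * Dd k0 μ u (n+1) + b * μ^2 * Dd k0 μ u n))
        - ∑' n : ℕ, (a+b) * μ^4 * Dd k0 μ u (n-1) :=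
        Summable.tsum_sub ((h1.mul_left a).add (hD.mul_left (b*μ^2))) (h2.mul_left ((a+b)*μ^4))
    _ = a * (∑' n, Dd k0 μ u (n+1)) + b*μ^2 * (∑' n, Dd k0 μ u n)
        - (a+b)*μ^4 * (∑' n : ℕ, Dd k0 μ u (n-1)) := by
        rw [Summable.tsum_add (h1.mul_left a) (hD.mul_left (b*μ^2)), tsum_mul_left, tsum_mul_left,
          tsum_mul_left]
    _ = (a + b*μ^2 - (a+b)*μ^4) * ∑' j, Dd k0 μ u j := by rw [e1, e2]; ring

/-- `⟨B(u,u), Au⟩ = 0` for all `u ∈ V` iff `a(1+μ²) + bμ² = 0`. -/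
theorem goy_energy_identity_iff (k0 μ a b : ℝ) (hk0 : 0 < k0) (hμ : 1 < μ) :
    (∀ u : ℕ → ℂ, u 0 = 0 → memV k0 μ u →
      pairH (goyB k0 μ a b u u) (opA k0 μ u) = 0) ↔
    a * (1 + μ^2) + b * μ^2 = 0 := by
  have hfac : a + b*μ^2 - (a+b)*μ^4 = (1 - μ^2) * (a*(1+μ^2) + b*μ^2) := by ring
  constructor
  · intro h
    set uT : ℕ → ℂ := fun j =>
      if j = 1 then 1 else if j = 2 then 1 else if j = 3 then Complex.I else 0 with huT
    have hu0 : uT 0 = 0 := by simp [huT]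
    have hmem : memV k0 μ uT := by
      refine summable_of_ne_finset_zero (s := {0,1,2}) fun n hn => ?_
      have h1 : n + 1 ≠ 1 := by simp at hn; omega
      have h2 : n + 1 ≠ 2 := by simp at hn; omega
      have h3 : n + 1 ≠ 3 := by simp at hn; omega
      have h0 : n ≠ 0 := by simp at hn; omega
      simp [huT, h0, h1, h2, h3]
    have hz := h uT hu0 hmem
    rw [pair_eq k0 μ a b hk0 hμ uT hu0 hmem] at hz
    have hS : ∑' j, Dd k0 μ uT j = -(kseq k0 μ 2 * (kseq k0 μ 1)^2) := by
      rw [tsum_eq_single 1 ?_]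
      · simp [Dd, Tt, huT, Complex.ext_iff]
      · intro j hj
        match j, hj with
        | 0, _ => simp [Dd, Tt, huT]
        | 1, hj => exact absurd rfl hj
        | (m+2), _ =>
          have h4 : m + 2 + 2 ≠ 1 := by omega
          have h5 : m + 2 + 2 ≠ 2 := by omega
          have h6 : m + 2 + 2 ≠ 3 := by omega
          simp [Dd, Tt, huT, h4, h5, h6]
    rw [hS] at hz
    have hSne : -(kseq k0 μ 2 * (kseq k0 μ 1)^2) ≠ 0 := by
      have h1 := kseq_pos hk0 hμ 1
      have h2 := kseq_pos hk0 hμ 2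
      have : 0 < kseq k0 μ 2 * (kseq k0 μ 1)^2 := by positivity
      linarith
    have hC : a + b*μ^2 - (a+b)*μ^4 = 0 := by
      rcases mul_eq_zero.mp hz with h | h
      · exact h
      · exact absurd h hSne
    rw [hfac] at hC
    rcases mul_eq_zero.mp hC with h | h
    · exfalso; nlinarith
    · exact h
  · intro hcond u hu0 hu
    rw [pair_eq k0 μ a b hk0 hμ u hu0 hu, hfac, hcond, mul_zero, zero_mul]
end

section
/- For the GOY shell model bilinear operator, ⟨B(u,u), Au⟩ = k_0³ (a + bμ² − aμ⁴ − bμ⁴) · Re( −i Σ_{n≥1} u_n* u_{n+1}* u_{n+2}* μ^{3n+1} ) for every u in V. -/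
open scoped ComplexConjugate

/-- `⟨B(u,u), Au⟩ = k₀³(a + bμ² − aμ⁴ − bμ⁴) Re(−i Σ_{n≥1} u_n^* u_{n+1}^* u_{n+2}^* μ^{3n+1})`. -/
theorem goy_energy_identity (k0 μ a b : ℝ) (hk0 : 0 < k0) (hμ : 1 < μ)
    (u : ℕ → ℂ) (hu0 : u 0 = 0) (huV : memV k0 μ u) :
    pairH (goyB k0 μ a b u u) (opA k0 μ u) =
      k0^3 * (a + b*μ^2 - a*μ^4 - b*μ^4) *
        ∑' n : ℕ,
          (-Complex.I * (conj (u (n+1)) * conj (u (n+2)) * conj (u (n+3)))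
            * ((μ : ℂ) ^ (3*(n+1)+1))).re := by
  have hμ0 : (0:ℝ) < μ := lt_trans one_pos hμ
  set k : ℕ → ℝ := kseq k0 μ with hkdef
  have hkpos : ∀ n, 0 < k n := fun n => mul_pos hk0 (pow_pos hμ0 n)
  have hkmono : ∀ m n, m ≤ n → k m ≤ k n := by
    intro m n h
    exact mul_le_mul_of_nonneg_left (pow_le_pow_right₀ hμ.le h) hk0.le
  set r : ℕ → ℝ :=
    fun n => (-Complex.I * (conj (u (n+1)) * conj (u (n+2)) * conj (u (n+3)))).re with hrdef
  -- the three pieces (already shifted to start at 0)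
  set A : ℕ → ℝ := fun n => (a * (k (n+1)^2 * k (n+2))) * r n with hAdef
  set B : ℕ → ℝ := fun n => (b * k (n+2)^3) * r n with hBdef
  set D : ℕ → ℝ := fun n => ((a+b) * (k (n+3)^2 * k (n+2))) * r n with hDdef
  -- unshifted versions
  set s : ℕ → ℝ := fun n => match n with | 0 => 0 | m+1 => B m with hsdef
  set t : ℕ → ℝ := fun n => match n with | 0 => 0 | 1 => 0 | m+2 => D m with htdef
  -- helper for real parts
  have re_comb : ∀ (x y z : ℝ) (X Y Z : ℂ),
      ((x:ℂ) * X + (y:ℂ) * Y - (z:ℂ) * Z).re = x * X.re + y * Y.re - z * Z.re := by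
    intro x y z X Y Z
    simp [Complex.re_ofReal_mul]
  -- per-term identity
  have hterm : ∀ n, (goyB k0 μ a b u u (n+1) * conj (opA k0 μ u (n+1))).re
      = A n + s n - t n := by
    intro n
    match n with
    | 0 =>
        have h1 : goyB k0 μ a b u u 1 * conj (opA k0 μ u 1)
            = ((a * (k 1^2 * k 2) : ℝ):ℂ)
                * (-Complex.I * (conj (u 1) * conj (u 2) * conj (u 3))) := by
          simp only [goyB, opA, hkdef, kseq, hu0, map_zero, map_mul, Complex.conj_ofReal,
            mul_zero, zero_mul, add_zero, sub_zero]
          push_cast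
          ring
        rw [h1, Complex.re_ofReal_mul]
        show _ = A 0 + 0 - 0
        simp [hAdef, hrdef]
    | 1 =>
        have h1 : goyB k0 μ a b u u 2 * conj (opA k0 μ u 2)
            = ((a * (k 2^2 * k 3) : ℝ):ℂ)
                * (-Complex.I * (conj (u 2) * conj (u 3) * conj (u 4)))
              + ((b * k 2^3 : ℝ):ℂ)
                * (-Complex.I * (conj (u 1) * conj (u 2) * conj (u 3))) := by
          simp only [goyB, opA, hkdef, kseq, hu0, map_zero, map_mul, Complex.conj_ofReal,
            mul_zero, zero_mul, add_zero, sub_zero]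
          push_cast
          ring
        rw [h1]
        show _ = A 1 + s 1 - 0
        rw [sub_zero]
        simp only [Complex.add_re, Complex.re_ofReal_mul]
        rfl
    | (m+2) =>
        have h1 : goyB k0 μ a b u u (m+3) * conj (opA k0 μ u (m+3))
            = ((a * (k (m+3)^2 * k (m+4)) : ℝ):ℂ)
                * (-Complex.I * (conj (u (m+3)) * conj (u (m+4)) * conj (u (m+5))))
              + ((b * k (m+3)^3 : ℝ):ℂ)
                * (-Complex.I * (conj (u (m+2)) * conj (u (m+3)) * conj (u (m+4))))
              - (((a+b) * (k (m+3)^2 * k (m+2)) : ℝ):ℂ)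
                * (-Complex.I * (conj (u (m+1)) * conj (u (m+2)) * conj (u (m+3)))) := by
          simp only [goyB, opA, hkdef, kseq, map_mul, Complex.conj_ofReal]
          push_cast
          ring
        rw [h1, re_comb]
  -- summability
  set w : ℕ → ℝ := fun n => k (n+1) * ‖u (n+1)‖ with hwdef
  have hw0 : ∀ n, 0 ≤ w n := fun n => mul_nonneg (hkpos _).le (norm_nonneg _)
  have hw2 : Summable (fun n => w n ^ 2) := by
    refine huV.congr fun n => ?_
    simp [hwdef, mul_pow]
    exact Or.inl rfl
  set M : ℝ := Real.sqrt (∑' n, w n ^ 2) with hMdef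
  have hM0 : 0 ≤ M := Real.sqrt_nonneg _
  have hM : ∀ n, w n ≤ M := by
    intro n
    have h1 : w n ^ 2 ≤ ∑' n, w n ^ 2 := Summable.le_tsum hw2 n (fun m _ => sq_nonneg _)
    nlinarith [Real.sq_sqrt (tsum_nonneg (L := SummationFilter.unconditional ℕ) (fun m => sq_nonneg (w m))), hw0 n, hM0]
  have hW : Summable (fun n => w n * w (n+1)) := by
    have h1 : Summable (fun n => w (n+1) ^ 2) := (summable_nat_add_iff 1).2 hw2
    refine Summable.of_nonneg_of_le (fun n => mul_nonneg (hw0 n) (hw0 (n+1)))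
      (fun n => ?_) (((hw2.add h1).mul_left (1/2)))
    nlinarith [sq_nonneg (w n - w (n+1))]
  have key : ∀ (C : ℝ) (e : ℕ → ℝ), (∀ n, |e n| ≤ C * (w n * w (n+1))) → Summable e := by
    intro C e h
    rw [← summable_abs_iff]
    exact Summable.of_nonneg_of_le (fun n => abs_nonneg _) h (hW.mul_left C)
  have hrbd : ∀ n, |r n| ≤ ‖u (n+1)‖ * (‖u (n+2)‖ * ‖u (n+3)‖) := by
    intro n
    calc |r n| ≤ ‖-Complex.I * (conj (u (n+1)) * conj (u (n+2)) * conj (u (n+3)))‖ :=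
          Complex.abs_re_le_norm _
    _ = ‖u (n+1)‖ * (‖u (n+2)‖ * ‖u (n+3)‖) := by
          simp [norm_mul]; ring
  have keq : ∀ m, k (m+1) = μ * k m := by
    intro m; simp [hkdef, kseq, pow_succ]; ring
  have main : ∀ (c : ℝ) (q : ℕ → ℝ), (∀ n, 0 ≤ q n) →
      (∀ n, q n ≤ μ^2 * (k (n+1) * (k (n+2) * k (n+3)))) →
      Summable (fun n => c * q n * r n) := by
    intro c q hq0 hqle
    refine key (|c| * μ^2 * M) _ (fun n => ?_)
    have e1 : |c * q n * r n| = |c| * (q n * |r n|) := by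
      rw [abs_mul, abs_mul, abs_of_nonneg (hq0 n)]; ring
    have e2 : q n * |r n|
        ≤ (μ^2 * (k (n+1) * (k (n+2) * k (n+3)))) * (‖u (n+1)‖ * (‖u (n+2)‖ * ‖u (n+3)‖)) :=
      mul_le_mul (hqle n) (hrbd n) (abs_nonneg _)
        (mul_nonneg (pow_nonneg hμ0.le 2)
          (mul_nonneg (hkpos _).le (mul_nonneg (hkpos _).le (hkpos _).le)))
    have e3 : (μ^2 * (k (n+1) * (k (n+2) * k (n+3)))) * (‖u (n+1)‖ * (‖u (n+2)‖ * ‖u (n+3)‖))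
        = μ^2 * (w n * (w (n+1) * w (n+2))) := by
      simp only [hwdef]; ring
    have e4 : w n * (w (n+1) * w (n+2)) ≤ w n * (w (n+1) * M) :=
      mul_le_mul_of_nonneg_left (mul_le_mul_of_nonneg_left (hM _) (hw0 _)) (hw0 _)
    calc |c * q n * r n| = |c| * (q n * |r n|) := e1
    _ ≤ |c| * ((μ^2 * (k (n+1) * (k (n+2) * k (n+3)))) * (‖u (n+1)‖ * (‖u (n+2)‖ * ‖u (n+3)‖))) :=
        mul_le_mul_of_nonneg_left e2 (abs_nonneg c)
    _ = |c| * (μ^2 * (w n * (w (n+1) * w (n+2)))) := by rw [e3]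
    _ ≤ |c| * (μ^2 * (w n * (w (n+1) * M))) :=
        mul_le_mul_of_nonneg_left (mul_le_mul_of_nonneg_left e4 (pow_nonneg hμ0.le 2)) (abs_nonneg c)
    _ = |c| * μ^2 * M * (w n * w (n+1)) := by ring
  have hA : Summable A := by
    refine main a (fun n => k (n+1)^2 * k (n+2))
      (fun n => mul_nonneg (sq_nonneg _) (hkpos _).le) (fun n => ?_)
    have h13 : k (n+1) ≤ μ^2 * k (n+3) :=
      le_trans (hkmono _ _ (by omega))
        (le_mul_of_one_le_left (hkpos _).le (one_le_pow₀ hμ.le))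
    calc k (n+1)^2 * k (n+2) = (k (n+1) * k (n+2)) * k (n+1) := by ring
    _ ≤ (k (n+1) * k (n+2)) * (μ^2 * k (n+3)) :=
        mul_le_mul_of_nonneg_left h13 (mul_nonneg (hkpos _).le (hkpos _).le)
    _ = μ^2 * (k (n+1) * (k (n+2) * k (n+3))) := by ring
  have hB : Summable B := by
    refine main b (fun n => k (n+2)^3) (fun n => pow_nonneg (hkpos _).le 3) (fun n => ?_)
    have h' : k (n+2) ≤ μ * k (n+3) :=
      le_trans (hkmono _ _ (by omega)) (le_mul_of_one_le_left (hkpos _).le hμ.le)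
    calc k (n+2)^3 = (μ * k (n+1) * k (n+2)) * k (n+2) := by rw [← keq (n+1)]; ring
    _ ≤ (μ * k (n+1) * k (n+2)) * (μ * k (n+3)) :=
        mul_le_mul_of_nonneg_left h'
          (mul_nonneg (mul_nonneg hμ0.le (hkpos _).le) (hkpos _).le)
    _ = μ^2 * (k (n+1) * (k (n+2) * k (n+3))) := by ring
  have hD : Summable D := by
    refine main (a+b) (fun n => k (n+3)^2 * k (n+2))
      (fun n => mul_nonneg (sq_nonneg _) (hkpos _).le) (fun n => ?_)
    have h3 : k (n+3) = μ^2 * k (n+1) := by rw [keq (n+2), keq (n+1)]; ring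
    refine le_of_eq ?_
    calc k (n+3)^2 * k (n+2) = (μ^2 * k (n+1)) * k (n+3) * k (n+2) := by rw [← h3]; ring
    _ = μ^2 * (k (n+1) * (k (n+2) * k (n+3))) := by ring
  have hs : Summable s := by
    refine (summable_nat_add_iff 1).mp (hB.congr fun n => ?_)
    rfl
  have ht : Summable t := by
    refine (summable_nat_add_iff 2).mp (hD.congr fun n => ?_)
    rfl
  -- now the computation
  have step1 : pairH (goyB k0 μ a b u u) (opA k0 μ u) = ∑' n, (A n + s n - t n) := by
    unfold pairH
    exact tsum_congr hterm
  have step2 : (∑' n, (A n + s n - t n)) = (∑' n, A n) + (∑' n, s n) - (∑' n, t n) := by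
    rw [Summable.tsum_sub (hA.add hs) ht, Summable.tsum_add hA hs]
  have hsum_s : (∑' n, s n) = ∑' n, B n := by
    rw [Summable.tsum_eq_zero_add hs]
    show (0:ℝ) + _ = _
    rw [zero_add]
  have ht1 : Summable (fun n => t (n+1)) := (summable_nat_add_iff 1).mpr ht
  have hsum_t : (∑' n, t n) = ∑' n, D n := by
    rw [Summable.tsum_eq_zero_add ht]
    show (0:ℝ) + _ = _
    rw [zero_add, Summable.tsum_eq_zero_add ht1]
    show (0:ℝ) + _ = _
    rw [zero_add]
  have step3 : (∑' n, A n) + (∑' n, B n) - (∑' n, D n) = ∑' n, (A n + B n - D n) := by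
    rw [Summable.tsum_sub (hA.add hB) hD, Summable.tsum_add hA hB]
  have step4 : ∀ n, A n + B n - D n
      = k0^3 * (a + b*μ^2 - a*μ^4 - b*μ^4) *
          (-Complex.I * (conj (u (n+1)) * conj (u (n+2)) * conj (u (n+3)))
            * ((μ : ℂ) ^ (3*(n+1)+1))).re := by
    intro n
    have hre : (-Complex.I * (conj (u (n+1)) * conj (u (n+2)) * conj (u (n+3)))
          * ((μ : ℂ) ^ (3*(n+1)+1))).re = r n * μ ^ (3*(n+1)+1) := by
      rw [show ((μ:ℂ) ^ (3*(n+1)+1)) = ((μ ^ (3*(n+1)+1) : ℝ) : ℂ) by push_cast; ring,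
        mul_comm _ ((μ ^ (3*(n+1)+1) : ℝ) : ℂ), Complex.re_ofReal_mul, hrdef, mul_comm]
    rw [hre]
    simp only [hAdef, hBdef, hDdef, hkdef, kseq]
    ring
  rw [step1, step2, hsum_s, hsum_t, step3]
  rw [tsum_congr step4, tsum_mul_left]
end

section
/- There is a constant C > 0 such that for all u, v in H and w in V, |⟨B(u,v), w⟩| ≤ C |u| |v| ‖w‖, where B is the GOY shell model bilinear operator; consequently B extends to a bounded bilinear map from H × H to V'. -/
open scoped ComplexConjugate

lemma mul_sq_summable (f g : ℕ → ℝ) (hf : Summable (fun n => f n ^ 2))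
    (hg : Summable (fun n => g n ^ 2)) : Summable (fun n => f n * g n) := by
  apply Summable.of_abs
  have hb : Summable (fun n => (f n ^ 2 + g n ^ 2) / 2) := (hf.add hg).div_const 2
  refine hb.of_nonneg_of_le (fun n => abs_nonneg _) (fun n => ?_)
  have h := two_mul_le_add_sq |f n| |g n|
  rw [abs_mul]
  simp only [sq_abs] at h
  nlinarith [abs_nonneg (f n), abs_nonneg (g n)]

lemma cs_tsum (f g : ℕ → ℝ) (hf0 : ∀ n, 0 ≤ f n) (hg0 : ∀ n, 0 ≤ g n)
    (hf : Summable (fun n => f n ^ 2)) (hg : Summable (fun n => g n ^ 2)) :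
    ∑' n, f n * g n ≤ Real.sqrt (∑' n, f n ^ 2) * Real.sqrt (∑' n, g n ^ 2) := by
  refine Summable.tsum_le_of_sum_le (mul_sq_summable f g hf hg) ?_
  intro s
  have h1 : (∑ i ∈ s, f i * g i) ^ 2 ≤ (∑ i ∈ s, f i ^ 2) * ∑ i ∈ s, g i ^ 2 :=
    Finset.sum_mul_sq_le_sq_mul_sq s f g
  have h2 : ∑ i ∈ s, f i ^ 2 ≤ ∑' n, f n ^ 2 :=
    Summable.sum_le_tsum s (fun n _ => sq_nonneg _) hf
  have h3 : ∑ i ∈ s, g i ^ 2 ≤ ∑' n, g n ^ 2 :=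
    Summable.sum_le_tsum s (fun n _ => sq_nonneg _) hg
  have h0 : 0 ≤ ∑ i ∈ s, f i * g i :=
    Finset.sum_nonneg fun i _ => mul_nonneg (hf0 i) (hg0 i)
  calc ∑ i ∈ s, f i * g i = Real.sqrt ((∑ i ∈ s, f i * g i) ^ 2) := (Real.sqrt_sq h0).symm
    _ ≤ Real.sqrt ((∑ i ∈ s, f i ^ 2) * ∑ i ∈ s, g i ^ 2) := Real.sqrt_le_sqrt h1
    _ = Real.sqrt (∑ i ∈ s, f i ^ 2) * Real.sqrt (∑ i ∈ s, g i ^ 2) :=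
        Real.sqrt_mul (Finset.sum_nonneg fun i _ => sq_nonneg _) _
    _ ≤ Real.sqrt (∑' n, f n ^ 2) * Real.sqrt (∑' n, g n ^ 2) :=
        mul_le_mul (Real.sqrt_le_sqrt h2) (Real.sqrt_le_sqrt h3)
          (Real.sqrt_nonneg _) (Real.sqrt_nonneg _)

/-- Trilinear bound: `|⟨B(u,v), w⟩| ≤ C |u| |v| ‖w‖`, so `B` extends to a
bounded bilinear map `H × H → V'`. -/
theorem goy_trilinear_bound (k0 μ a b : ℝ) (hk0 : 0 < k0) (hμ : 1 < μ) :
    ∃ C > (0:ℝ), ∀ u v w : ℕ → ℂ,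
      u 0 = 0 → v 0 = 0 → w 0 = 0 →
      memH u → memH v → memV k0 μ w →
      |pairH (goyB k0 μ a b u v) w| ≤
        C * Real.sqrt (hSq u) * Real.sqrt (hSq v) * Real.sqrt (vSq k0 μ w) := by
  have hμ0 : (0:ℝ) < μ := by linarith
  refine ⟨4 * ((|a| + |b| + 1) * μ), by positivity, ?_⟩
  intro u v w hu0 hv0 hw0 hu hv hw
  set K : ℝ := (|a| + |b| + 1) * μ with hKdef
  have hKpos : 0 < K := by positivity
  set A := Real.sqrt (hSq u) with hAdef
  set Bv := Real.sqrt (hSq v) with hBdef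
  set W := Real.sqrt (vSq k0 μ w) with hWdef
  have hA0 : 0 ≤ A := Real.sqrt_nonneg _
  have hBv0 : 0 ≤ Bv := Real.sqrt_nonneg _
  have hW0 : 0 ≤ W := Real.sqrt_nonneg _
  have kpos : ∀ n, 0 < kseq k0 μ n := fun n => mul_pos hk0 (pow_pos hμ0 n)
  have kstep : ∀ n, kseq k0 μ (n+1) = μ * kseq k0 μ n := by
    intro n; unfold kseq; ring
  have kmono : ∀ n, kseq k0 μ n ≤ kseq k0 μ (n+1) := by
    intro n; rw [kstep n]
    exact le_mul_of_one_le_left (kpos n).le hμ.le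
  have kle1 : ∀ n, kseq k0 μ (n+1) ≤ μ * kseq k0 μ (n+1) := fun n =>
    le_mul_of_one_le_left (kpos (n+1)).le hμ.le
  have kle2 : ∀ n, kseq k0 μ n ≤ μ * kseq k0 μ (n+1) := fun n =>
    (kmono n).trans (kle1 n)
  -- sup bound on v
  have hv_sup : ∀ i, ‖v i‖ ≤ Bv := by
    intro i
    cases i with
    | zero => rw [hv0]; simpa using hBv0
    | succ n =>
      have h1 : ‖v (n+1)‖ ^ 2 ≤ hSq v := Summable.le_tsum hv n (fun m _ => sq_nonneg _)
      calc ‖v (n+1)‖ = Real.sqrt (‖v (n+1)‖^2) := (Real.sqrt_sq (norm_nonneg _)).symm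
        _ ≤ Bv := Real.sqrt_le_sqrt h1
  -- facts about the full sum for u
  have hufull : Summable (fun n : ℕ => ‖u n‖ ^ 2) := by
    rw [← summable_nat_add_iff 1]; exact hu
  have hufull_eq : (∑' n : ℕ, ‖u n‖ ^ 2) = hSq u := by
    rw [Summable.tsum_eq_zero_add hufull, hu0]; simp [hSq]
  -- the three shifted u-sequences
  set F1 : ℕ → ℝ := fun n => ‖u (n+2)‖ with hF1def
  set F2 : ℕ → ℝ := fun n => ‖u n‖ with hF2def
  set F3 : ℕ → ℝ := fun n => ‖u (n-1)‖ with hF3def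
  have hF1s : Summable (fun n => F1 n ^ 2) := by
    have := (summable_nat_add_iff (f := fun n : ℕ => ‖u n‖ ^ 2) 2).mpr hufull
    exact this
  have hF2s : Summable (fun n => F2 n ^ 2) := hufull
  have hF3s : Summable (fun n => F3 n ^ 2) := by
    rw [← summable_nat_add_iff 1]
    exact hufull
  have hF1le : (∑' n, F1 n ^ 2) ≤ hSq u := by
    rw [← hufull_eq]
    exact Summable.tsum_le_tsum_of_inj (fun n => n + 2) (add_left_injective 2)
      (fun c _ => sq_nonneg _) (fun n => le_rfl) hF1s hufull
  have hF2le : (∑' n, F2 n ^ 2) ≤ hSq u := le_of_eq hufull_eq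
  have hF3le : (∑' n, F3 n ^ 2) ≤ hSq u := by
    have h := Summable.tsum_eq_zero_add hF3s
    rw [← hufull_eq, h]
    simp only [hF3def]
    rw [hu0]
    simp
  -- the weighted w sequence
  set t : ℕ → ℝ := fun n => kseq k0 μ (n+1) * ‖w (n+1)‖ with htdef
  have ht0 : ∀ n, 0 ≤ t n := fun n => mul_nonneg (kpos _).le (norm_nonneg _)
  have ht2eq : (fun n => t n ^ 2) = fun n : ℕ => (kseq k0 μ (n+1))^2 * ‖w (n+1)‖^2 := by
    funext n; simp [htdef, mul_pow]
  have ht2s : Summable (fun n => t n ^ 2) := by rw [ht2eq]; exact hw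
  have htW : Real.sqrt (∑' n, t n ^ 2) = W := by rw [ht2eq, hWdef]; rfl
  -- generic Cauchy-Schwarz bound
  have bound_j : ∀ F : ℕ → ℝ, (∀ n, 0 ≤ F n) → Summable (fun n => F n ^ 2) →
      (∑' n, F n ^ 2) ≤ hSq u → (∑' n, F n * t n) ≤ A * W := by
    intro F hF0 hFs hFle
    calc (∑' n, F n * t n)
        ≤ Real.sqrt (∑' n, F n ^ 2) * Real.sqrt (∑' n, t n ^ 2) :=
          cs_tsum F t hF0 ht0 hFs ht2s
      _ ≤ A * W := by
          rw [htW]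
          exact mul_le_mul_of_nonneg_right (Real.sqrt_le_sqrt hFle) hW0
  -- pointwise bound on the pairing terms
  set g : ℕ → ℝ := fun n => K * Bv * ((F1 n + F2 n + F2 n + F3 n) * t n) with hgdef
  have habsk : ∀ m, |kseq k0 μ m| = kseq k0 μ m := fun m => abs_of_pos (kpos m)
  have hterm : ∀ n : ℕ, ‖goyB k0 μ a b u v (n+1) * conj (w (n+1))‖ ≤ g n := by
    intro n
    have hidx : goyB k0 μ a b u v (n+1) =
        -Complex.I *
          ( ((a * kseq k0 μ (n+2) : ℝ) : ℂ) * conj (u (n+2)) * conj (v (n+3))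
          + ((b * kseq k0 μ (n+1) : ℝ) : ℂ) * conj (u n) * conj (v (n+2))
          - ((a * kseq k0 μ n : ℝ) : ℂ) * conj (u n) * conj (v (n-1))
          - ((b * kseq k0 μ n : ℝ) : ℂ) * conj (u (n-1)) * conj (v n)) := rfl
    have hnorm : ‖goyB k0 μ a b u v (n+1)‖ ≤
        |a| * kseq k0 μ (n+2) * ‖u (n+2)‖ * ‖v (n+3)‖
        + |b| * kseq k0 μ (n+1) * ‖u n‖ * ‖v (n+2)‖
        + |a| * kseq k0 μ n * ‖u n‖ * ‖v (n-1)‖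
        + |b| * kseq k0 μ n * ‖u (n-1)‖ * ‖v n‖ := by
      rw [hidx, norm_mul]
      simp only [norm_neg, Complex.norm_I, one_mul]
      set p := ((a * kseq k0 μ (n+2) : ℝ) : ℂ) * conj (u (n+2)) * conj (v (n+3)) with hp
      set q := ((b * kseq k0 μ (n+1) : ℝ) : ℂ) * conj (u n) * conj (v (n+2)) with hq
      set r := ((a * kseq k0 μ n : ℝ) : ℂ) * conj (u n) * conj (v (n-1)) with hr
      set s := ((b * kseq k0 μ n : ℝ) : ℂ) * conj (u (n-1)) * conj (v n) with hs
      have htri : ‖p + q - r - s‖ ≤ ‖p‖ + ‖q‖ + ‖r‖ + ‖s‖ := by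
        have h1 := norm_sub_le (p + q - r) s
        have h2 := norm_sub_le (p + q) r
        have h3 := norm_add_le p q
        linarith
      have hnp : ‖p‖ = |a| * kseq k0 μ (n+2) * ‖u (n+2)‖ * ‖v (n+3)‖ := by
        rw [hp]
        simp [norm_mul, Complex.norm_real, Real.norm_eq_abs, abs_mul, habsk, RCLike.norm_conj]
      have hnq : ‖q‖ = |b| * kseq k0 μ (n+1) * ‖u n‖ * ‖v (n+2)‖ := by
        rw [hq]
        simp [norm_mul, Complex.norm_real, Real.norm_eq_abs, abs_mul, habsk, RCLike.norm_conj]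
      have hnr : ‖r‖ = |a| * kseq k0 μ n * ‖u n‖ * ‖v (n-1)‖ := by
        rw [hr]
        simp [norm_mul, Complex.norm_real, Real.norm_eq_abs, abs_mul, habsk, RCLike.norm_conj]
      have hns : ‖s‖ = |b| * kseq k0 μ n * ‖u (n-1)‖ * ‖v n‖ := by
        rw [hs]
        simp [norm_mul, Complex.norm_real, Real.norm_eq_abs, abs_mul, habsk, RCLike.norm_conj]
      rw [hnp, hnq, hnr, hns] at htri
      exact htri
    have keyB : ∀ (c kk : ℝ) (x y : ℂ), 0 ≤ c → c ≤ |a| + |b| + 1 →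
        kk ≤ μ * kseq k0 μ (n+1) → 0 ≤ kk → ‖y‖ ≤ Bv →
        c * kk * ‖x‖ * ‖y‖ ≤ ((|a| + |b| + 1) * μ) * kseq k0 μ (n+1) * ‖x‖ * Bv := by
      intro c kk x y hc hcle hkle hk0' hy
      have hC : (0:ℝ) ≤ |a| + |b| + 1 := by positivity
      have hmk : (0:ℝ) < μ * kseq k0 μ (n+1) := mul_pos hμ0 (kpos (n+1))
      have h1 : c * kk ≤ ((|a| + |b| + 1) * μ) * kseq k0 μ (n+1) := by
        nlinarith [mul_nonneg hc (sub_nonneg.mpr hkle),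
          mul_nonneg (sub_nonneg.mpr hcle) hmk.le]
      have h2 : c * kk * ‖x‖ ≤ ((|a| + |b| + 1) * μ) * kseq k0 μ (n+1) * ‖x‖ :=
        mul_le_mul_of_nonneg_right h1 (norm_nonneg _)
      have h3 : 0 ≤ ((|a| + |b| + 1) * μ) * kseq k0 μ (n+1) * ‖x‖ :=
        mul_nonneg (mul_nonneg (mul_nonneg hC hμ0.le) (kpos _).le) (norm_nonneg _)
      exact mul_le_mul h2 hy (norm_nonneg _) h3
    have e1 := keyB |a| (kseq k0 μ (n+2)) (u (n+2)) (v (n+3)) (abs_nonneg a)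
      (by linarith [abs_nonneg b]) (le_of_eq (kstep (n+1))) (kpos _).le (hv_sup _)
    have e2 := keyB |b| (kseq k0 μ (n+1)) (u n) (v (n+2)) (abs_nonneg b)
      (by linarith [abs_nonneg a]) (kle1 n) (kpos _).le (hv_sup _)
    have e3 := keyB |a| (kseq k0 μ n) (u n) (v (n-1)) (abs_nonneg a)
      (by linarith [abs_nonneg b]) (kle2 n) (kpos _).le (hv_sup _)
    have e4 := keyB |b| (kseq k0 μ n) (u (n-1)) (v n) (abs_nonneg b)
      (by linarith [abs_nonneg a]) (kle2 n) (kpos _).le (hv_sup _)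
    have hsum : ‖goyB k0 μ a b u v (n+1)‖ ≤
        ((|a| + |b| + 1) * μ) * kseq k0 μ (n+1) * ‖u (n+2)‖ * Bv
        + ((|a| + |b| + 1) * μ) * kseq k0 μ (n+1) * ‖u n‖ * Bv
        + ((|a| + |b| + 1) * μ) * kseq k0 μ (n+1) * ‖u n‖ * Bv
        + ((|a| + |b| + 1) * μ) * kseq k0 μ (n+1) * ‖u (n-1)‖ * Bv := by
      linarith [hnorm, e1, e2, e3, e4]
    calc ‖goyB k0 μ a b u v (n+1) * conj (w (n+1))‖
        = ‖goyB k0 μ a b u v (n+1)‖ * ‖w (n+1)‖ := by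
          rw [norm_mul, RCLike.norm_conj]
      _ ≤ (((|a| + |b| + 1) * μ) * kseq k0 μ (n+1) * ‖u (n+2)‖ * Bv
          + ((|a| + |b| + 1) * μ) * kseq k0 μ (n+1) * ‖u n‖ * Bv
          + ((|a| + |b| + 1) * μ) * kseq k0 μ (n+1) * ‖u n‖ * Bv
          + ((|a| + |b| + 1) * μ) * kseq k0 μ (n+1) * ‖u (n-1)‖ * Bv) * ‖w (n+1)‖ :=
          mul_le_mul_of_nonneg_right hsum (norm_nonneg _)
      _ = g n := by
          simp only [hgdef, hKdef, hF1def, hF2def, hF3def, htdef]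
          ring
  -- summability of the dominating sequence
  have hS1 : Summable (fun n => F1 n * t n) := mul_sq_summable _ _ hF1s ht2s
  have hS2 : Summable (fun n => F2 n * t n) := mul_sq_summable _ _ hF2s ht2s
  have hS3 : Summable (fun n => F3 n * t n) := mul_sq_summable _ _ hF3s ht2s
  have heq : (fun n => (F1 n + F2 n + F2 n + F3 n) * t n)
      = fun n => F1 n * t n + F2 n * t n + F2 n * t n + F3 n * t n := by
    funext n; ring
  have hinner : Summable (fun n => (F1 n + F2 n + F2 n + F3 n) * t n) := by
    rw [heq]; exact ((hS1.add hS2).add hS2).add hS3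
  have hgsum : Summable g := by
    simp only [hgdef]
    exact hinner.mul_left (K * Bv)
  have habs : ∀ n, |(goyB k0 μ a b u v (n+1) * conj (w (n+1))).re| ≤ g n := by
    intro n
    have h1 := Complex.abs_re_le_norm (goyB k0 μ a b u v (n+1) * conj (w (n+1)))
    exact h1.trans (hterm n)
  have hrabs_sum : Summable (fun n => |(goyB k0 μ a b u v (n+1) * conj (w (n+1))).re|) :=
    hgsum.of_nonneg_of_le (fun n => abs_nonneg _) habs
  have h4 : |∑' n, (goyB k0 μ a b u v (n+1) * conj (w (n+1))).re|
      ≤ ∑' n, |(goyB k0 μ a b u v (n+1) * conj (w (n+1))).re| := by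
    have := norm_tsum_le_tsum_norm
      (f := fun n => (goyB k0 μ a b u v (n+1) * conj (w (n+1))).re)
      (by simpa [Real.norm_eq_abs] using hrabs_sum)
    simpa [Real.norm_eq_abs] using this
  have b1 := bound_j F1 (fun n => norm_nonneg _) hF1s hF1le
  have b2 := bound_j F2 (fun n => norm_nonneg _) hF2s hF2le
  have b3 := bound_j F3 (fun n => norm_nonneg _) hF3s hF3le
  calc |pairH (goyB k0 μ a b u v) w|
      = |∑' n, (goyB k0 μ a b u v (n+1) * conj (w (n+1))).re| := rfl
    _ ≤ ∑' n, |(goyB k0 μ a b u v (n+1) * conj (w (n+1))).re| := h4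
    _ ≤ ∑' n, g n := Summable.tsum_le_tsum habs hrabs_sum hgsum
    _ = K * Bv * ((∑' n, F1 n * t n) + (∑' n, F2 n * t n)
        + (∑' n, F2 n * t n) + (∑' n, F3 n * t n)) := by
        simp only [hgdef]
        rw [tsum_mul_left, heq,
          Summable.tsum_add ((hS1.add hS2).add hS2) hS3,
          Summable.tsum_add (hS1.add hS2) hS2,
          Summable.tsum_add hS1 hS2]
    _ ≤ K * Bv * (A * W + A * W + A * W + A * W) := by
        have h5 : (∑' n, F1 n * t n) + (∑' n, F2 n * t n)
            + (∑' n, F2 n * t n) + (∑' n, F3 n * t n)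
            ≤ A * W + A * W + A * W + A * W := by linarith
        exact mul_le_mul_of_nonneg_left h5 (by positivity)
    _ = 4 * K * A * Bv * W := by ring
end

section
/- There is a constant C > 0 such that ‖B(u,v)‖ ≤ C ‖u‖ ‖v‖ for all u, v in V, i.e., the GOY shell model bilinear operator B maps V × V boundedly into V. -/
open scoped ComplexConjugate

private lemma sum4_sq_le (x y z w : ℝ) : (x+y+z+w)^2 ≤ 4*(x^2+y^2+z^2+w^2) := by
  nlinarith [sq_nonneg (x-y), sq_nonneg (x-z), sq_nonneg (x-w),
    sq_nonneg (y-z), sq_nonneg (y-w), sq_nonneg (z-w)]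

/-- `B : V × V → V` is bounded: `‖B(u,v)‖ ≤ C ‖u‖ ‖v‖`. -/
theorem goy_V_bound (k0 μ a b : ℝ) (hk0 : 0 < k0) (hμ : 1 < μ) :
    ∃ C > (0:ℝ), ∀ u v : ℕ → ℂ,
      u 0 = 0 → v 0 = 0 → memV k0 μ u → memV k0 μ v →
      memV k0 μ (goyB k0 μ a b u v) ∧
      Real.sqrt (vSq k0 μ (goyB k0 μ a b u v)) ≤
        C * Real.sqrt (vSq k0 μ u) * Real.sqrt (vSq k0 μ v) := by
  have hμ0 : (0:ℝ) < μ := lt_trans one_pos hμ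
  set M : ℝ := (a^2 + b^2 + 1) * μ^4 with hMdef
  have hμ1 : (1:ℝ) ≤ μ := le_of_lt hμ
  have hμ2 : (1:ℝ) ≤ μ^2 := one_le_pow₀ hμ1
  have hμ4 : (1:ℝ) ≤ μ^4 := one_le_pow₀ hμ1
  have hμ24 : μ^2 ≤ μ^4 := pow_le_pow_right₀ hμ1 (by norm_num)
  have hM0 : 0 < M := by rw [hMdef]; positivity
  have haM : a^2 ≤ M := by nlinarith [sq_nonneg a, sq_nonneg b]
  have haM4 : a^2 * μ^4 ≤ M := by nlinarith [sq_nonneg a, sq_nonneg b, pow_pos hμ0 4]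
  have hbM2 : b^2 * μ^2 ≤ M := by nlinarith [sq_nonneg a, sq_nonneg b, pow_pos hμ0 4]
  have hbM4 : b^2 * μ^4 ≤ M := by nlinarith [sq_nonneg a, sq_nonneg b, pow_pos hμ0 4]
  refine ⟨4 * Real.sqrt M, mul_pos (by norm_num) (Real.sqrt_pos.mpr hM0), ?_⟩
  intro u v hu0 hv0 hu hv
  have hkpos : ∀ n, 0 < kseq k0 μ n := fun n => by unfold kseq; positivity
  have hkmono : ∀ n, kseq k0 μ n ≤ kseq k0 μ (n+1) := by
    intro n
    unfold kseq
    have : μ ^ n ≤ μ ^ (n+1) := pow_le_pow_right₀ hμ1 (Nat.le_succ n)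
    nlinarith
  have hk1 : ∀ n, kseq k0 μ n ≤ μ * kseq k0 μ (n-1) := by
    intro n
    match n with
    | 0 => unfold kseq; simp; nlinarith
    | Nat.succ m =>
      unfold kseq
      simp only [Nat.succ_sub_one]
      rw [pow_succ]
      nlinarith [pow_pos hμ0 m]
  have hk2 : ∀ n, kseq k0 μ n ≤ μ^2 * kseq k0 μ (n-2) := by
    intro n
    match n with
    | 0 => unfold kseq; simp; nlinarith
    | 1 => unfold kseq; norm_num; nlinarith
    | (m+2) =>
      unfold kseq
      simp only [Nat.add_sub_cancel]
      rw [pow_add]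
      nlinarith [pow_pos hμ0 m]
  set f : ℕ → ℝ := fun n => (kseq k0 μ n)^2 * ‖u n‖^2 with hfdef
  set g : ℕ → ℝ := fun n => (kseq k0 μ n)^2 * ‖v n‖^2 with hgdef
  have hf0 : f 0 = 0 := by simp [hfdef, hu0]
  have hg0 : g 0 = 0 := by simp [hgdef, hv0]
  have hfnn : ∀ n, 0 ≤ f n := fun n => by
    simp only [hfdef]; positivity
  have hgnn : ∀ n, 0 ≤ g n := fun n => by
    simp only [hgdef]; positivity
  have hfS : Summable f := (summable_nat_add_iff 1).mp hu
  have hgS : Summable g := (summable_nat_add_iff 1).mp hv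
  set Su : ℝ := ∑' n, f n with hSudef
  set Sv : ℝ := ∑' n, g n with hSvdef
  have hSuv : Su = vSq k0 μ u := by
    rw [hSudef, Summable.tsum_eq_zero_add hfS, hf0, zero_add]; rfl
  have hSvv : Sv = vSq k0 μ v := by
    rw [hSvdef, Summable.tsum_eq_zero_add hgS, hg0, zero_add]; rfl
  have hfle : ∀ n, f n ≤ Su := fun n => Summable.le_tsum hfS n (fun j _ => hfnn j)
  have hgle : ∀ n, g n ≤ Sv := fun n => Summable.le_tsum hgS n (fun j _ => hgnn j)
  have hSu0 : 0 ≤ Su := tsum_nonneg hfnn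
  have hSv0 : 0 ≤ Sv := tsum_nonneg hgnn
  have hterm : ∀ (c : ℝ) (x y : ℂ), ‖((c:ℝ):ℂ) * conj x * conj y‖ = |c| * (‖x‖ * ‖y‖) := by
    intro c x y; simp [norm_mul, mul_assoc]
  have hnormB : ∀ m : ℕ, ‖goyB k0 μ a b u v m‖ ≤
      |a| * kseq k0 μ (m+1) * (‖u (m+1)‖ * ‖v (m+2)‖)
    + |b| * kseq k0 μ m * (‖u (m-1)‖ * ‖v (m+1)‖)
    + |a| * kseq k0 μ (m-1) * (‖u (m-1)‖ * ‖v (m-2)‖)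
    + |b| * kseq k0 μ (m-1) * (‖u (m-2)‖ * ‖v (m-1)‖) := by
    intro m
    unfold goyB
    set A := ((a * kseq k0 μ (m+1) : ℝ) : ℂ) * conj (u (m+1)) * conj (v (m+2)) with hA
    set B := ((b * kseq k0 μ m : ℝ) : ℂ) * conj (u (m-1)) * conj (v (m+1)) with hB
    set Cc := ((a * kseq k0 μ (m-1) : ℝ) : ℂ) * conj (u (m-1)) * conj (v (m-2)) with hC
    set D := ((b * kseq k0 μ (m-1) : ℝ) : ℂ) * conj (u (m-2)) * conj (v (m-1)) with hD
    have h1 : ‖-Complex.I * (A + B - Cc - D)‖ = ‖A + B - Cc - D‖ := by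
      rw [norm_mul]; simp
    rw [h1]
    have h2 : ‖A + B - Cc - D‖ ≤ ‖A‖ + ‖B‖ + ‖Cc‖ + ‖D‖ := by
      calc ‖A + B - Cc - D‖ ≤ ‖A + B - Cc‖ + ‖D‖ := norm_sub_le _ _
        _ ≤ ‖A + B‖ + ‖Cc‖ + ‖D‖ := by linarith [norm_sub_le (A + B) Cc]
        _ ≤ ‖A‖ + ‖B‖ + ‖Cc‖ + ‖D‖ := by linarith [norm_add_le A B]
    have hAe : ‖A‖ = |a| * kseq k0 μ (m+1) * (‖u (m+1)‖ * ‖v (m+2)‖) := by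
      rw [hA, hterm, abs_mul, abs_of_pos (hkpos (m+1))]
    have hBe : ‖B‖ = |b| * kseq k0 μ m * (‖u (m-1)‖ * ‖v (m+1)‖) := by
      rw [hB, hterm, abs_mul, abs_of_pos (hkpos m)]
    have hCe : ‖Cc‖ = |a| * kseq k0 μ (m-1) * (‖u (m-1)‖ * ‖v (m-2)‖) := by
      rw [hC, hterm, abs_mul, abs_of_pos (hkpos (m-1))]
    have hDe : ‖D‖ = |b| * kseq k0 μ (m-1) * (‖u (m-2)‖ * ‖v (m-1)‖) := by
      rw [hD, hterm, abs_mul, abs_of_pos (hkpos (m-1))]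
    linarith
  have key : ∀ n : ℕ, (kseq k0 μ (n+1))^2 * ‖goyB k0 μ a b u v (n+1)‖^2 ≤
      4 * M * Sv * (f (n+2) + 2 * f n + f (n-1)) := by
    intro n
    have hm1 : (n+1) - 1 = n := rfl
    have hm2 : (n+1+1) - 2 = n := rfl
    have hm2' : (n+1) - 2 = n - 1 := rfl
    set T1 : ℝ := |a| * ((kseq k0 μ (n+2) * ‖u (n+2)‖) * (kseq k0 μ (n+3) * ‖v (n+3)‖)) with hT1
    set T2 : ℝ := |b| * μ * ((kseq k0 μ n * ‖u n‖) * (kseq k0 μ (n+2) * ‖v (n+2)‖)) with hT2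
    set T3 : ℝ := |a| * μ^2 * ((kseq k0 μ n * ‖u n‖) * (kseq k0 μ (n-1) * ‖v (n-1)‖)) with hT3
    set T4 : ℝ := |b| * μ^2 * ((kseq k0 μ (n-1) * ‖u (n-1)‖) * (kseq k0 μ n * ‖v n‖)) with hT4
    have hkm := hkpos (n+1)
    -- step 1 : kseq (n+1) * ‖B (n+1)‖ ≤ T1 + T2 + T3 + T4
    have e1 : kseq k0 μ (n+1) * (|a| * kseq k0 μ (n+2) * (‖u (n+2)‖ * ‖v (n+3)‖)) ≤ T1 := by
      have hle : kseq k0 μ (n+1) ≤ kseq k0 μ (n+3) :=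
        le_trans (hkmono (n+1)) (hkmono (n+2))
      have h0 : (0:ℝ) ≤ |a| * kseq k0 μ (n+2) * (‖u (n+2)‖ * ‖v (n+3)‖) :=
        mul_nonneg (mul_nonneg (abs_nonneg a) (hkpos _).le)
          (mul_nonneg (norm_nonneg _) (norm_nonneg _))
      calc kseq k0 μ (n+1) * (|a| * kseq k0 μ (n+2) * (‖u (n+2)‖ * ‖v (n+3)‖))
          ≤ kseq k0 μ (n+3) * (|a| * kseq k0 μ (n+2) * (‖u (n+2)‖ * ‖v (n+3)‖)) :=
            mul_le_mul_of_nonneg_right hle h0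
        _ = T1 := by rw [hT1]; ring
    have e2 : kseq k0 μ (n+1) * (|b| * kseq k0 μ (n+1) * (‖u n‖ * ‖v (n+2)‖)) ≤ T2 := by
      have hkk : kseq k0 μ (n+1) * kseq k0 μ (n+1) ≤ (μ * kseq k0 μ n) * kseq k0 μ (n+2) := by
        have t1 : kseq k0 μ (n+1) ≤ μ * kseq k0 μ n := by
          have := hk1 (n+1); rwa [hm1] at this
        exact mul_le_mul t1 (hkmono (n+1)) hkm.le
          (mul_nonneg hμ0.le (hkpos n).le)
      have h0 : (0:ℝ) ≤ |b| * (‖u n‖ * ‖v (n+2)‖) :=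
        mul_nonneg (abs_nonneg b) (mul_nonneg (norm_nonneg _) (norm_nonneg _))
      calc kseq k0 μ (n+1) * (|b| * kseq k0 μ (n+1) * (‖u n‖ * ‖v (n+2)‖))
          = (kseq k0 μ (n+1) * kseq k0 μ (n+1)) * (|b| * (‖u n‖ * ‖v (n+2)‖)) := by ring
        _ ≤ ((μ * kseq k0 μ n) * kseq k0 μ (n+2)) * (|b| * (‖u n‖ * ‖v (n+2)‖)) :=
            mul_le_mul_of_nonneg_right hkk h0
        _ = T2 := by rw [hT2]; ring
    have hkk2 : kseq k0 μ (n+1) * kseq k0 μ n ≤ (μ^2 * kseq k0 μ (n-1)) * kseq k0 μ n := by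
      have t1 : kseq k0 μ (n+1) ≤ μ^2 * kseq k0 μ (n-1) := by
        have := hk2 (n+1); rwa [hm2'] at this
      exact mul_le_mul_of_nonneg_right t1 (hkpos n).le
    have e3 : kseq k0 μ (n+1) * (|a| * kseq k0 μ n * (‖u n‖ * ‖v (n-1)‖)) ≤ T3 := by
      have h0 : (0:ℝ) ≤ |a| * (‖u n‖ * ‖v (n-1)‖) :=
        mul_nonneg (abs_nonneg a) (mul_nonneg (norm_nonneg _) (norm_nonneg _))
      calc kseq k0 μ (n+1) * (|a| * kseq k0 μ n * (‖u n‖ * ‖v (n-1)‖))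
          = (kseq k0 μ (n+1) * kseq k0 μ n) * (|a| * (‖u n‖ * ‖v (n-1)‖)) := by ring
        _ ≤ ((μ^2 * kseq k0 μ (n-1)) * kseq k0 μ n) * (|a| * (‖u n‖ * ‖v (n-1)‖)) :=
            mul_le_mul_of_nonneg_right hkk2 h0
        _ = T3 := by rw [hT3]; ring
    have e4 : kseq k0 μ (n+1) * (|b| * kseq k0 μ n * (‖u (n-1)‖ * ‖v n‖)) ≤ T4 := by
      have h0 : (0:ℝ) ≤ |b| * (‖u (n-1)‖ * ‖v n‖) :=
        mul_nonneg (abs_nonneg b) (mul_nonneg (norm_nonneg _) (norm_nonneg _))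
      calc kseq k0 μ (n+1) * (|b| * kseq k0 μ n * (‖u (n-1)‖ * ‖v n‖))
          = (kseq k0 μ (n+1) * kseq k0 μ n) * (|b| * (‖u (n-1)‖ * ‖v n‖)) := by ring
        _ ≤ ((μ^2 * kseq k0 μ (n-1)) * kseq k0 μ n) * (|b| * (‖u (n-1)‖ * ‖v n‖)) :=
            mul_le_mul_of_nonneg_right hkk2 h0
        _ = T4 := by rw [hT4]; ring
    have step1 : kseq k0 μ (n+1) * ‖goyB k0 μ a b u v (n+1)‖ ≤ T1 + T2 + T3 + T4 := by
      have h := hnormB (n+1)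
      rw [hm1, hm2'] at h
      have h' := mul_le_mul_of_nonneg_left h hkm.le
      have hexp : kseq k0 μ (n+1) *
          ( |a| * kseq k0 μ (n+1+1) * (‖u (n+1+1)‖ * ‖v (n+1+2)‖)
          + |b| * kseq k0 μ (n+1) * (‖u n‖ * ‖v (n+1+1)‖)
          + |a| * kseq k0 μ n * (‖u n‖ * ‖v (n-1)‖)
          + |b| * kseq k0 μ n * (‖u (n-1)‖ * ‖v n‖))
          = kseq k0 μ (n+1) * (|a| * kseq k0 μ (n+2) * (‖u (n+2)‖ * ‖v (n+3)‖))
          + kseq k0 μ (n+1) * (|b| * kseq k0 μ (n+1) * (‖u n‖ * ‖v (n+2)‖))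
          + kseq k0 μ (n+1) * (|a| * kseq k0 μ n * (‖u n‖ * ‖v (n-1)‖))
          + kseq k0 μ (n+1) * (|b| * kseq k0 μ n * (‖u (n-1)‖ * ‖v n‖)) := by
        norm_num; ring
      rw [hexp] at h'
      linarith
    -- step 2 : squares
    have sq1 : T1^2 ≤ M * Sv * f (n+2) := by
      have hfg : T1^2 = (a^2 * g (n+3)) * f (n+2) := by
        rw [hT1, hfdef, hgdef]; simp only []
        rw [← sq_abs a]; ring
      rw [hfg]
      refine mul_le_mul_of_nonneg_right ?_ (hfnn _)
      exact mul_le_mul haM (hgle _) (hgnn _) hM0.le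
    have sq2 : T2^2 ≤ M * Sv * f n := by
      have hfg : T2^2 = ((b^2 * μ^2) * g (n+2)) * f n := by
        rw [hT2, hfdef, hgdef]; simp only []
        rw [← sq_abs b]; ring
      rw [hfg]
      refine mul_le_mul_of_nonneg_right ?_ (hfnn _)
      exact mul_le_mul hbM2 (hgle _) (hgnn _) hM0.le
    have sq3 : T3^2 ≤ M * Sv * f n := by
      have hfg : T3^2 = ((a^2 * μ^4) * g (n-1)) * f n := by
        rw [hT3, hfdef, hgdef]; simp only []
        rw [← sq_abs a]; ring
      rw [hfg]
      refine mul_le_mul_of_nonneg_right ?_ (hfnn _)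
      exact mul_le_mul haM4 (hgle _) (hgnn _) hM0.le
    have sq4 : T4^2 ≤ M * Sv * f (n-1) := by
      have hfg : T4^2 = ((b^2 * μ^4) * g n) * f (n-1) := by
        rw [hT4, hfdef, hgdef]; simp only []
        rw [← sq_abs b]; ring
      rw [hfg]
      refine mul_le_mul_of_nonneg_right ?_ (hfnn _)
      exact mul_le_mul hbM4 (hgle _) (hgnn _) hM0.le
    have hBnn : (0:ℝ) ≤ kseq k0 μ (n+1) * ‖goyB k0 μ a b u v (n+1)‖ :=
      mul_nonneg hkm.le (norm_nonneg _)
    have hsq : (kseq k0 μ (n+1) * ‖goyB k0 μ a b u v (n+1)‖)^2 ≤ (T1 + T2 + T3 + T4)^2 :=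
      pow_le_pow_left₀ hBnn step1 2
    have h4 : (T1 + T2 + T3 + T4)^2 ≤ 4 * (T1^2 + T2^2 + T3^2 + T4^2) :=
      sum4_sq_le T1 T2 T3 T4
    have heq : (kseq k0 μ (n+1))^2 * ‖goyB k0 μ a b u v (n+1)‖^2
        = (kseq k0 μ (n+1) * ‖goyB k0 μ a b u v (n+1)‖)^2 := by ring
    rw [heq]
    linarith [hsq, h4, sq1, sq2, sq3, sq4]
  -- summability of the bound
  have hfS2 : Summable (fun n => f (n+2)) := (summable_nat_add_iff 2).mpr hfS
  have hfSm : Summable (fun n : ℕ => f (n-1)) := by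
    apply (summable_nat_add_iff 1).mp
    simpa using hfS
  have hbS : Summable (fun n : ℕ => 4 * M * Sv * (f (n+2) + 2 * f n + f (n-1))) := by
    apply Summable.mul_left
    exact (hfS2.add (hfS.mul_left 2)).add hfSm
  have hBmem : memV k0 μ (goyB k0 μ a b u v) := by
    apply Summable.of_nonneg_of_le _ key hbS
    intro n
    positivity
  refine ⟨hBmem, ?_⟩
  -- tsum bound
  have hts2 : ∑' n, f (n+2) ≤ Su := by
    have h1 : Summable (fun n => f (n+1)) := (summable_nat_add_iff 1).mpr hfS
    have e1 : Su = f 0 + ∑' n, f (n+1) := Summable.tsum_eq_zero_add hfS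
    have e2 : ∑' n, f (n+1) = f 1 + ∑' n, f (n+2) := Summable.tsum_eq_zero_add h1
    have := hfnn 0; have := hfnn 1
    linarith
  have htsm : ∑' n : ℕ, f (n-1) = Su := by
    have e1 : ∑' n : ℕ, f (n-1) = f 0 + ∑' n : ℕ, f n := by
      rw [Summable.tsum_eq_zero_add hfSm]
      simp
    rw [e1, hf0, zero_add]
  have hts : vSq k0 μ (goyB k0 μ a b u v) ≤ 16 * M * Su * Sv := by
    have h1 : vSq k0 μ (goyB k0 μ a b u v)
        ≤ ∑' n : ℕ, 4 * M * Sv * (f (n+2) + 2 * f n + f (n-1)) :=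
      Summable.tsum_le_tsum key hBmem hbS
    have h2 : ∑' n : ℕ, 4 * M * Sv * (f (n+2) + 2 * f n + f (n-1))
        = 4 * M * Sv * ((∑' n, f (n+2)) + 2 * Su + ∑' n : ℕ, f (n-1)) := by
      rw [tsum_mul_left]
      congr 1
      rw [Summable.tsum_add (hfS2.add (hfS.mul_left 2)) hfSm, Summable.tsum_add hfS2 (hfS.mul_left 2),
        tsum_mul_left]
    have h3 : 4 * M * Sv * ((∑' n, f (n+2)) + 2 * Su + ∑' n : ℕ, f (n-1))
        ≤ 4 * M * Sv * (4 * Su) := by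
      apply mul_le_mul_of_nonneg_left _ (by positivity : (0:ℝ) ≤ 4 * M * Sv)
      rw [htsm]; linarith
    calc vSq k0 μ (goyB k0 μ a b u v)
        ≤ 4 * M * Sv * ((∑' n, f (n+2)) + 2 * Su + ∑' n : ℕ, f (n-1)) := h2 ▸ h1
      _ ≤ 4 * M * Sv * (4 * Su) := h3
      _ = 16 * M * Su * Sv := by ring
  rw [← hSuv, ← hSvv]
  calc Real.sqrt (vSq k0 μ (goyB k0 μ a b u v)) ≤ Real.sqrt (16 * M * Su * Sv) :=
      Real.sqrt_le_sqrt hts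
    _ = 4 * Real.sqrt M * Real.sqrt Su * Real.sqrt Sv := by
      rw [Real.sqrt_mul (by positivity), Real.sqrt_mul (by positivity),
        Real.sqrt_mul (by norm_num : (0:ℝ) ≤ 16)]
      rw [show (16:ℝ) = 4^2 by norm_num, Real.sqrt_sq (by norm_num : (0:ℝ) ≤ 4)]
end
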